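/- arXiv:1904.11657 — 7 statements merged into one kernel-verified Lean document; each statement's English description precedes it below -/
import Mathlib

section
/- The Promislow group P = ⟨x, y | x⁻¹y²x = y⁻², y⁻¹x²y = x⁻²⟩ is not left orderable. -/
/-!
If `≤` is a left-invariant linear order and `x, y ≥ 1` satisfy the Promislow relations, then
`x · (x y x y² x y) = 1` with both factors `≥ 1`, forcing `x = 1`. The relations are preserved by
inverting either generator, so the sign restriction is harmless and `x = 1` in every left-ordered
group. In the Promislow group itself `x ≠ 1`, as it maps onto `i` under `x ↦ i`, `y ↦ j` in `Q₈`.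
-/

/-- The relators `x⁻¹y²xy²` and `y⁻¹x²yx²` of the Promislow group
`P = ⟨x, y ∣ x⁻¹y²x = y⁻², y⁻¹x²y = x⁻²⟩`. -/
def promislowRels : Set (FreeGroup (Fin 2)) :=
  {(FreeGroup.of 0)⁻¹ * (FreeGroup.of 1) ^ 2 * FreeGroup.of 0 * (FreeGroup.of 1) ^ 2,
   (FreeGroup.of 1)⁻¹ * (FreeGroup.of 0) ^ 2 * FreeGroup.of 1 * (FreeGroup.of 0) ^ 2}

/-- The Promislow group. -/
abbrev Promislow : Type := PresentedGroup promislowRels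

/-- The generator `x` of the Promislow group. -/
def px : Promislow := PresentedGroup.of 0

/-- The generator `y` of the Promislow group. -/
def py : Promislow := PresentedGroup.of 1

def IsPromislowPair {G : Type*} [Group G] (x y : G) : Prop :=
  x⁻¹ * y ^ 2 * x * y ^ 2 = 1 ∧ y⁻¹ * x ^ 2 * y * x ^ 2 = 1

def IsLeftInvariant {G : Type*} [Mul G] (le : G → G → Prop) : Prop :=
  ∀ a b c : G, le a b → le (c * a) (c * b)

namespace IsPromislowPair

variable {G : Type*} [Group G] {x y : G}

theorem swap (h : IsPromislowPair x y) : IsPromislowPair y x := h.symm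

theorem inv_left (h : IsPromislowPair x y) : IsPromislowPair x⁻¹ y := by
  obtain ⟨h₁, h₂⟩ := h
  constructor
  · calc x⁻¹⁻¹ * y ^ 2 * x⁻¹ * y ^ 2
        = (y ^ 2)⁻¹ * x * (x⁻¹ * y ^ 2 * x * y ^ 2) * x⁻¹ * y ^ 2 := by group
      _ = 1 := by rw [h₁]; group
  · calc y⁻¹ * x⁻¹ ^ 2 * y * x⁻¹ ^ 2
        = x ^ 2 * (y⁻¹ * x ^ 2 * y * x ^ 2)⁻¹ * (x ^ 2)⁻¹ := by group
      _ = 1 := by rw [h₂]; group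

theorem inv_right (h : IsPromislowPair x y) : IsPromislowPair x y⁻¹ := h.swap.inv_left.swap

theorem mul_eq_one (h : IsPromislowPair x y) : x * (x * y * x * y * y * x * y) = 1 := by
  obtain ⟨h₁, h₂⟩ := h
  calc x * (x * y * x * y * y * x * y)
      = y * (y⁻¹ * x ^ 2 * y * x ^ 2) * (x⁻¹ * y ^ 2 * x * y ^ 2) * y⁻¹ := by
        simp only [pow_two]; group
    _ = 1 := by rw [h₁, h₂]; group

end IsPromislowPair

section LeftInvariantRelation

variable {M : Type*} {le : M → M → Prop}

theorem IsLeftInvariant.one_le_mul [Monoid M] [IsTrans M le] (hle : IsLeftInvariant le) {a b : M}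
    (ha : le 1 a) (hb : le 1 b) : le 1 (a * b) :=
  trans_of le ha (by simpa using hle 1 b a hb)

theorem IsLeftInvariant.eq_one_of_mul_eq_one [Monoid M] [Std.Antisymm le]
    (hle : IsLeftInvariant le) {a b : M} (ha : le 1 a) (hb : le 1 b) (hab : a * b = 1) : a = 1 :=
  antisymm_of le (by simpa [hab] using hle 1 b a hb) ha

theorem IsLeftInvariant.one_le_or_one_le_inv [Group M] [Std.Total le] (hle : IsLeftInvariant le)
    (a : M) : le 1 a ∨ le 1 a⁻¹ :=
  (total_of le 1 a).imp_right fun h => by simpa using hle a 1 a⁻¹ h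

end LeftInvariantRelation

namespace IsPromislowPair

variable {G : Type*} [Group G] {le : G → G → Prop} {x y : G}

theorem eq_one_of_one_le [IsTrans G le] [Std.Antisymm le] (h : IsPromislowPair x y)
    (hle : IsLeftInvariant le) (hx : le 1 x) (hy : le 1 y) : x = 1 := by
  refine hle.eq_one_of_mul_eq_one hx ?_ h.mul_eq_one
  repeat' first | assumption | apply hle.one_le_mul

theorem eq_one_of_isLeftInvariant [IsLinearOrder G le] (h : IsPromislowPair x y)
    (hle : IsLeftInvariant le) : x = 1 := by
  rcases hle.one_le_or_one_le_inv x with hx | hx <;>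
    rcases hle.one_le_or_one_le_inv y with hy | hy
  · exact h.eq_one_of_one_le hle hx hy
  · exact h.inv_right.eq_one_of_one_le hle hx hy
  · exact inv_eq_one.mp (h.inv_left.eq_one_of_one_le hle hx hy)
  · exact inv_eq_one.mp (h.inv_left.inv_right.eq_one_of_one_le hle hx hy)

end IsPromislowPair

theorem isPromislowPair_px_py : IsPromislowPair px py :=
  ⟨PresentedGroup.one_of_mem (Or.inl rfl), PresentedGroup.one_of_mem (Or.inr rfl)⟩

def Promislow.lift {G : Type*} [Group G] {x y : G} (h : IsPromislowPair x y) :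
    Promislow →* G :=
  PresentedGroup.toGroup (f := ![x, y]) <| by
    rintro r (rfl | rfl)
    · simpa using h.1
    · simpa using h.2

theorem Promislow.lift_px {G : Type*} [Group G] {x y : G} (h : IsPromislowPair x y) :
    Promislow.lift h px = x :=
  PresentedGroup.toGroup.of _

theorem px_ne_one : px ≠ 1 := by
  have hQ₈ : IsPromislowPair (QuaternionGroup.a 1 : QuaternionGroup 2) (.xa 0) :=
    ⟨by decide, by decide⟩
  intro h
  have : (QuaternionGroup.a 1 : QuaternionGroup 2) = 1 := by
    rw [← Promislow.lift_px hQ₈, h, map_one]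
  exact absurd this (by decide)

/-- The Promislow group is not left orderable: it admits no linear order
invariant under left multiplication. -/
theorem promislow_not_left_orderable :
    ¬ ∃ le : Promislow → Promislow → Prop,
        IsLinearOrder Promislow le ∧ ∀ a b c : Promislow, le a b → le (c * a) (c * b) := by
  rintro ⟨le, hlin, hle⟩
  exact px_ne_one (isPromislowPair_px_py.eq_one_of_isLeftInvariant hle)
end

section
/- Let Γ be a torsion-free subgroup of GL(n,ℤ) ⋉ ℤⁿ with translation lattice L (so {I}×L is the maximal normal abelian subgroup of Γ, π: Γ → Γ/L the projection). Suppose α, β ∈ Γ satisfy π(α) ≠ I, π(β) ≠ I, α²β = βα⁻², and β²α = αβ⁻². Then ⟨α, β⟩ is isomorphic to the Promislow group. -/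
/-- An element of `GL(n,ℤ) ⋉ ℤⁿ`: a pair `(A, a)` of a linear part and a translation part. -/
structure Aff (n : ℕ) where
  lin : Matrix.GeneralLinearGroup (Fin n) ℤ
  vec : Fin n → ℤ

namespace Aff

variable {n : ℕ}

/-- The semidirect product multiplication `(A,a)(B,b) = (AB, a + Ab)`. -/
def mul' (p q : Aff n) : Aff n :=
  ⟨p.lin * q.lin, p.vec + (p.lin : Matrix (Fin n) (Fin n) ℤ).mulVec q.vec⟩

/-- Inversion: `(A,a)⁻¹ = (A⁻¹, -A⁻¹a)`. -/
noncomputable def inv' (p : Aff n) : Aff n :=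
  ⟨p.lin⁻¹, -((p.lin⁻¹ : Matrix (Fin n) (Fin n) ℤ).mulVec p.vec)⟩

/-- The group `GL(n,ℤ) ⋉ ℤⁿ`. -/
noncomputable instance : Group (Aff n) where
  mul := mul'
  one := ⟨1, 0⟩
  inv := inv'
  mul_assoc := by
    rintro ⟨A, a⟩ ⟨B, b⟩ ⟨C, c⟩
    show mul' (mul' _ _) _ = mul' _ (mul' _ _)
    simp [mul', mul_assoc, Matrix.mulVec_add, Matrix.mulVec_mulVec, add_assoc]
  one_mul := by
    rintro ⟨A, a⟩
    show mul' ⟨1, 0⟩ _ = _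
    simp [mul']
  mul_one := by
    rintro ⟨A, a⟩
    show mul' _ ⟨1, 0⟩ = _
    simp [mul']
  inv_mul_cancel := by
    rintro ⟨A, a⟩
    show mul' (inv' _) _ = ⟨1, 0⟩
    simp [mul', inv', Matrix.mulVec_mulVec]

end Aff

section Generic
variable {G : Type*} [Group G]

lemma conj_swap {x y : G} (h : x⁻¹ * y * x = y⁻¹) : x * y * x⁻¹ = y⁻¹ := by
  have h2 : x⁻¹ * y⁻¹ * x = y := by
    calc x⁻¹ * y⁻¹ * x = (x⁻¹ * y * x)⁻¹ := by simp [mul_inv_rev, mul_assoc]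
    _ = (y⁻¹)⁻¹ := by rw [h]
    _ = y := inv_inv y
  conv_lhs => rw [← h2]
  group

lemma sq_commute {x y : G} (h : x⁻¹ * y * x = y⁻¹) : Commute (x ^ 2) y := by
  have h2 : x * y * x⁻¹ = y⁻¹ := conj_swap h
  have key : x ^ 2 * y * (x ^ 2)⁻¹ = y := by
    have h3 : x * (x * y * x⁻¹) * x⁻¹ = y := by
      rw [h2, ← h]; group
    calc x ^ 2 * y * (x ^ 2)⁻¹ = x * (x * y * x⁻¹) * x⁻¹ := by
          simp [pow_two, mul_inv_rev, mul_assoc]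
    _ = y := h3
  unfold Commute SemiconjBy
  calc x ^ 2 * y = (x ^ 2 * y * (x ^ 2)⁻¹) * x ^ 2 := by simp [mul_assoc]
  _ = y * x ^ 2 := by rw [key]

variable {a b : G}

lemma e1 (r1 : a ^ 2 * b = b * a⁻¹ ^ 2) : b⁻¹ * a ^ 2 * b = (a ^ 2)⁻¹ := by
  calc b⁻¹ * a ^ 2 * b = b⁻¹ * (a ^ 2 * b) := by rw [mul_assoc]
  _ = b⁻¹ * (b * a⁻¹ ^ 2) := by rw [r1]
  _ = (a ^ 2)⁻¹ := by simp [pow_two, mul_inv_rev, mul_assoc]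

lemma e2 (r2 : b ^ 2 * a = a * b⁻¹ ^ 2) : a⁻¹ * b ^ 2 * a = (b ^ 2)⁻¹ := e1 r2

lemma e1' (r1 : a ^ 2 * b = b * a⁻¹ ^ 2) : b * a ^ 2 * b⁻¹ = (a ^ 2)⁻¹ := by
  have h := conj_swap (x := b) (y := a ^ 2) ?_
  · exact h
  · simpa using e1 r1

lemma e2' (r2 : b ^ 2 * a = a * b⁻¹ ^ 2) : a * b ^ 2 * a⁻¹ = (b ^ 2)⁻¹ := e1' r2

lemma e4 (r1 : a ^ 2 * b = b * a⁻¹ ^ 2) (r2 : b ^ 2 * a = a * b⁻¹ ^ 2) :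
    (a * b) ^ 2 * (b * a) ^ 2 = 1 := by
  have hab2a : a * b ^ 2 * a = a ^ 2 * b⁻¹ ^ 2 := by
    calc a * b ^ 2 * a = a * (b ^ 2 * a) := by rw [mul_assoc]
    _ = a * (a * b⁻¹ ^ 2) := by rw [r2]
    _ = a ^ 2 * b⁻¹ ^ 2 := by simp [pow_two, mul_assoc]
  calc (a * b) ^ 2 * (b * a) ^ 2 = a * b * (a * b ^ 2 * a) * b * a := by
        simp [pow_two, mul_assoc]
  _ = a * b * (a ^ 2 * b⁻¹ ^ 2) * b * a := by rw [hab2a]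
  _ = a * (b * a ^ 2 * b⁻¹) * a := by simp [pow_two, mul_inv_rev, mul_assoc]
  _ = a * (a ^ 2)⁻¹ * a := by rw [e1' r1]
  _ = 1 := by simp [pow_two, mul_inv_rev, mul_assoc]

lemma e5 (r1 : a ^ 2 * b = b * a⁻¹ ^ 2) (r2 : b ^ 2 * a = a * b⁻¹ ^ 2) :
    a⁻¹ * (a * b) ^ 2 * a = ((a * b) ^ 2)⁻¹ := by
  have h5 : (b * a) ^ 2 = ((a * b) ^ 2)⁻¹ := eq_inv_of_mul_eq_one_right (e4 r1 r2)
  calc a⁻¹ * (a * b) ^ 2 * a = (b * a) ^ 2 := by simp [pow_two, mul_assoc]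
  _ = ((a * b) ^ 2)⁻¹ := h5

lemma e6 (r1 : a ^ 2 * b = b * a⁻¹ ^ 2) (r2 : b ^ 2 * a = a * b⁻¹ ^ 2) :
    b⁻¹ * (a * b) ^ 2 * b = ((a * b) ^ 2)⁻¹ := by
  have hab2a : a * b ^ 2 * a = a ^ 2 * b⁻¹ ^ 2 := by
    calc a * b ^ 2 * a = a * (b ^ 2 * a) := by rw [mul_assoc]
    _ = a * (a * b⁻¹ ^ 2) := by rw [r2]
    _ = a ^ 2 * b⁻¹ ^ 2 := by simp [pow_two, mul_assoc]
  have key : (a * b) ^ 2 * b * (a * b) ^ 2 = b := by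
    calc (a * b) ^ 2 * b * (a * b) ^ 2 = a * b * (a * b ^ 2 * a) * b * a * b := by
          simp [pow_two, mul_assoc]
    _ = a * b * (a ^ 2 * b⁻¹ ^ 2) * b * a * b := by rw [hab2a]
    _ = a * (b * a ^ 2 * b⁻¹) * a * b := by simp [pow_two, mul_inv_rev, mul_assoc]
    _ = a * (a ^ 2)⁻¹ * a * b := by rw [e1' r1]
    _ = b := by simp [pow_two, mul_inv_rev, mul_assoc]
  calc b⁻¹ * (a * b) ^ 2 * b
      = b⁻¹ * ((a * b) ^ 2 * b * (a * b) ^ 2) * ((a * b) ^ 2)⁻¹ := by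
        simp [mul_assoc]
  _ = b⁻¹ * b * ((a * b) ^ 2)⁻¹ := by rw [key]
  _ = ((a * b) ^ 2)⁻¹ := by simp

lemma cuv (r2 : b ^ 2 * a = a * b⁻¹ ^ 2) :
    Commute (a ^ 2) (b ^ 2) := sq_commute (e2 r2)

lemma cuw (r1 : a ^ 2 * b = b * a⁻¹ ^ 2) (r2 : b ^ 2 * a = a * b⁻¹ ^ 2) :
    Commute (a ^ 2) ((a * b) ^ 2) := sq_commute (e5 r1 r2)

lemma cvw (r1 : a ^ 2 * b = b * a⁻¹ ^ 2) (r2 : b ^ 2 * a = a * b⁻¹ ^ 2) :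
    Commute (b ^ 2) ((a * b) ^ 2) := sq_commute (e6 r1 r2)

lemma cab2 (r1 : a ^ 2 * b = b * a⁻¹ ^ 2) :
    (a * b)⁻¹ * a ^ 2 * (a * b) = (a ^ 2)⁻¹ := by
  calc (a * b)⁻¹ * a ^ 2 * (a * b) = b⁻¹ * a ^ 2 * b := by
        simp [pow_two, mul_inv_rev, mul_assoc]
  _ = (a ^ 2)⁻¹ := e1 r1

end Generic

section Generic
variable {G : Type*} [Group G]

lemma triple_mul {u v w : G} (huv : Commute u v) (huw : Commute u w) (hvw : Commute v w)
    (i j k i' j' k' : ℤ) :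
    (u ^ i * v ^ j * w ^ k) * (u ^ i' * v ^ j' * w ^ k')
      = u ^ (i + i') * v ^ (j + j') * w ^ (k + k') := by
  have c1 : Commute (u ^ i') (v ^ j * w ^ k) :=
    ((huv.zpow_zpow i' j)).mul_right ((huw.zpow_zpow i' k))
  have c2 : Commute (w ^ k) (v ^ j') := (hvw.symm.zpow_zpow k j')
  calc (u ^ i * v ^ j * w ^ k) * (u ^ i' * v ^ j' * w ^ k')
      = u ^ i * ((v ^ j * w ^ k) * u ^ i') * (v ^ j' * w ^ k') := by
        simp [mul_assoc]
  _ = u ^ i * (u ^ i' * (v ^ j * w ^ k)) * (v ^ j' * w ^ k') := by rw [← c1.eq]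
  _ = (u ^ i * u ^ i') * (v ^ j * (w ^ k * v ^ j')) * w ^ k' := by simp [mul_assoc]
  _ = (u ^ i * u ^ i') * (v ^ j * (v ^ j' * w ^ k)) * w ^ k' := by rw [c2.eq]
  _ = (u ^ i * u ^ i') * (v ^ j * v ^ j') * (w ^ k * w ^ k') := by simp [mul_assoc]
  _ = u ^ (i + i') * v ^ (j + j') * w ^ (k + k') := by rw [zpow_add, zpow_add, zpow_add]

lemma triple_inv {u v w : G} (huv : Commute u v) (huw : Commute u w) (hvw : Commute v w)
    (i j k : ℤ) :
    (u ^ i * v ^ j * w ^ k)⁻¹ = u ^ (-i) * v ^ (-j) * w ^ (-k) := by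
  apply inv_eq_of_mul_eq_one_left
  rw [triple_mul huv huw hvw]
  simp

lemma finOrder_of_zpow {g : G} {m : ℤ} (hm : m ≠ 0) (h : g ^ m = 1) : IsOfFinOrder g := by
  rw [isOfFinOrder_iff_pow_eq_one]
  refine ⟨m.natAbs, Int.natAbs_pos.mpr hm, ?_⟩
  rcases Int.natAbs_eq m with he | he
  · rw [← zpow_natCast, ← he, h]
  · rw [← zpow_natCast]
    have h2 : (m.natAbs : ℤ) = -m := by omega
    rw [h2, zpow_neg, h, inv_one]

end Generic

namespace PromAux

lemma q1 : px⁻¹ * py ^ 2 * px * py ^ 2 = 1 := by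
  have h : PresentedGroup.mk promislowRels ((FreeGroup.of 0)⁻¹ * (FreeGroup.of 1) ^ 2 *
      FreeGroup.of 0 * (FreeGroup.of 1) ^ 2) = 1 :=
    (QuotientGroup.eq_one_iff _).mpr
      (Subgroup.subset_normalClosure (Set.mem_insert _ _))
  simpa [map_mul, map_inv, map_pow, px, py, PresentedGroup.of] using h

lemma q2 : py⁻¹ * px ^ 2 * py * px ^ 2 = 1 := by
  have h : PresentedGroup.mk promislowRels ((FreeGroup.of 1)⁻¹ * (FreeGroup.of 0) ^ 2 *
      FreeGroup.of 1 * (FreeGroup.of 0) ^ 2) = 1 :=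
    (QuotientGroup.eq_one_iff _).mpr
      (Subgroup.subset_normalClosure (Set.mem_insert_of_mem _ rfl))
  simpa [map_mul, map_inv, map_pow, px, py, PresentedGroup.of] using h

lemma pr1 : px ^ 2 * py = py * px⁻¹ ^ 2 := by
  calc px ^ 2 * py = py * (py⁻¹ * px ^ 2 * py * px ^ 2) * px⁻¹ ^ 2 := by
        simp [pow_two, mul_assoc]
  _ = py * px⁻¹ ^ 2 := by rw [q2]; rw [mul_one]

lemma pr2 : py ^ 2 * px = px * py⁻¹ ^ 2 := by
  calc py ^ 2 * px = px * (px⁻¹ * py ^ 2 * px * py ^ 2) * py⁻¹ ^ 2 := by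
        simp [pow_two, mul_assoc]
  _ = px * py⁻¹ ^ 2 := by rw [q1]; rw [mul_one]

lemma gen_top : Subgroup.closure ({px, py} : Set Promislow) = ⊤ := by
  rw [← PresentedGroup.closure_range_of promislowRels]
  congr 1
  ext g
  constructor
  · rintro (rfl | rfl)
    exacts [⟨0, rfl⟩, ⟨1, rfl⟩]
  · rintro ⟨i, rfl⟩
    fin_cases i
    · left; rfl
    · right; rfl


def Zsub : Subgroup Promislow :=
  Subgroup.closure {px ^ 2, py ^ 2, (px * py) ^ 2}

lemma conj_px : ∀ z ∈ Zsub, px * z * px⁻¹ ∈ Zsub ∧ px⁻¹ * z * px ∈ Zsub := by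
  intro z hz
  induction hz using Subgroup.closure_induction with
  | mem t ht =>
    rcases ht with rfl | rfl | rfl
    · constructor
      · have e : px * px ^ 2 * px⁻¹ = px ^ 2 := by simp [pow_two, mul_assoc]
        rw [e]; exact Subgroup.subset_closure (by left; rfl)
      · have e : px⁻¹ * px ^ 2 * px = px ^ 2 := by simp [pow_two, mul_assoc]
        rw [e]; exact Subgroup.subset_closure (by left; rfl)
    · constructor
      · rw [conj_swap (e2 pr2)]
        exact Subgroup.inv_mem _ (Subgroup.subset_closure (by right; left; rfl))
      · rw [e2 pr2]
        exact Subgroup.inv_mem _ (Subgroup.subset_closure (by right; left; rfl))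
    · constructor
      · rw [conj_swap (e5 pr1 pr2)]
        exact Subgroup.inv_mem _ (Subgroup.subset_closure (by right; right; rfl))
      · rw [e5 pr1 pr2]
        exact Subgroup.inv_mem _ (Subgroup.subset_closure (by right; right; rfl))
  | one => exact ⟨by simpa using Zsub.one_mem, by simpa using Zsub.one_mem⟩
  | mul x y hx hy ihx ihy =>
    constructor
    · have e : px * (x * y) * px⁻¹ = (px * x * px⁻¹) * (px * y * px⁻¹) := by
        simp [mul_assoc]
      rw [e]; exact Subgroup.mul_mem _ ihx.1 ihy.1
    · have e : px⁻¹ * (x * y) * px = (px⁻¹ * x * px) * (px⁻¹ * y * px) := by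
        simp [mul_assoc]
      rw [e]; exact Subgroup.mul_mem _ ihx.2 ihy.2
  | inv x hx ihx =>
    constructor
    · have e : px * x⁻¹ * px⁻¹ = (px * x * px⁻¹)⁻¹ := by simp [mul_assoc]
      rw [e]; exact Subgroup.inv_mem _ ihx.1
    · have e : px⁻¹ * x⁻¹ * px = (px⁻¹ * x * px)⁻¹ := by simp [mul_assoc]
      rw [e]; exact Subgroup.inv_mem _ ihx.2

lemma conj_py : ∀ z ∈ Zsub, py * z * py⁻¹ ∈ Zsub ∧ py⁻¹ * z * py ∈ Zsub := by
  intro z hz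
  induction hz using Subgroup.closure_induction with
  | mem t ht =>
    rcases ht with rfl | rfl | rfl
    · constructor
      · rw [conj_swap (e1 pr1)]
        exact Subgroup.inv_mem _ (Subgroup.subset_closure (by left; rfl))
      · rw [e1 pr1]
        exact Subgroup.inv_mem _ (Subgroup.subset_closure (by left; rfl))
    · constructor
      · have e : py * py ^ 2 * py⁻¹ = py ^ 2 := by simp [pow_two, mul_assoc]
        rw [e]; exact Subgroup.subset_closure (by right; left; rfl)
      · have e : py⁻¹ * py ^ 2 * py = py ^ 2 := by simp [pow_two, mul_assoc]
        rw [e]; exact Subgroup.subset_closure (by right; left; rfl)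
    · constructor
      · rw [conj_swap (e6 pr1 pr2)]
        exact Subgroup.inv_mem _ (Subgroup.subset_closure (by right; right; rfl))
      · rw [e6 pr1 pr2]
        exact Subgroup.inv_mem _ (Subgroup.subset_closure (by right; right; rfl))
  | one => exact ⟨by simpa using Zsub.one_mem, by simpa using Zsub.one_mem⟩
  | mul x y hx hy ihx ihy =>
    constructor
    · have e : py * (x * y) * py⁻¹ = (py * x * py⁻¹) * (py * y * py⁻¹) := by
        simp [mul_assoc]
      rw [e]; exact Subgroup.mul_mem _ ihx.1 ihy.1
    · have e : py⁻¹ * (x * y) * py = (py⁻¹ * x * py) * (py⁻¹ * y * py) := by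
        simp [mul_assoc]
      rw [e]; exact Subgroup.mul_mem _ ihx.2 ihy.2
  | inv x hx ihx =>
    constructor
    · have e : py * x⁻¹ * py⁻¹ = (py * x * py⁻¹)⁻¹ := by simp [mul_assoc]
      rw [e]; exact Subgroup.inv_mem _ ihx.1
    · have e : py⁻¹ * x⁻¹ * py = (py⁻¹ * x * py)⁻¹ := by simp [mul_assoc]
      rw [e]; exact Subgroup.inv_mem _ ihx.2

lemma hconj : ∀ g : Promislow, ∀ z ∈ Zsub, g * z * g⁻¹ ∈ Zsub := by
  intro g
  have hg : g ∈ Subgroup.closure ({px, py} : Set Promislow) := by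
    rw [gen_top]; trivial
  refine (Subgroup.closure_induction
    (p := fun g _ => (∀ z ∈ Zsub, g * z * g⁻¹ ∈ Zsub) ∧ (∀ z ∈ Zsub, g⁻¹ * z * g ∈ Zsub))
    ?_ ?_ ?_ ?_ hg).1
  · rintro x (rfl | rfl)
    · exact ⟨fun z hz => (conj_px z hz).1, fun z hz => (conj_px z hz).2⟩
    · exact ⟨fun z hz => (conj_py z hz).1, fun z hz => (conj_py z hz).2⟩
  · constructor <;> · intro z hz; simpa using hz
  · intro x y hx hy ihx ihy
    constructor
    · intro z hz
      have e : (x * y) * z * (x * y)⁻¹ = x * (y * z * y⁻¹) * x⁻¹ := by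
        simp [mul_assoc]
      rw [e]; exact ihx.1 _ (ihy.1 z hz)
    · intro z hz
      have e : (x * y)⁻¹ * z * (x * y) = y⁻¹ * (x⁻¹ * z * x) * y := by
        simp [mul_assoc]
      rw [e]; exact ihy.2 _ (ihx.2 z hz)
  · intro x hx ihx
    constructor
    · intro z hz
      have e : x⁻¹ * z * (x⁻¹)⁻¹ = x⁻¹ * z * x := by rw [inv_inv]
      rw [e]; exact ihx.2 z hz
    · intro z hz
      have e : (x⁻¹)⁻¹ * z * x⁻¹ = x * z * x⁻¹ := by rw [inv_inv]
      rw [e]; exact ihx.1 z hz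

instance : Zsub.Normal := ⟨fun z hz g => hconj g z hz⟩


lemma quot_mem (g : Promislow) :
    ((g : Promislow ⧸ Zsub) = 1) ∨ (g : Promislow ⧸ Zsub) = (px : Promislow) ∨
      (g : Promislow ⧸ Zsub) = (py : Promislow) ∨
      (g : Promislow ⧸ Zsub) = ((px : Promislow) : Promislow ⧸ Zsub) * ((py : Promislow) : Promislow ⧸ Zsub) := by
  have hg : g ∈ Subgroup.closure ({px, py} : Set Promislow) := by rw [gen_top]; trivial
  set A : Promislow ⧸ Zsub := ((px : Promislow) : Promislow ⧸ Zsub) with hAdef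
  set B : Promislow ⧸ Zsub := ((py : Promislow) : Promislow ⧸ Zsub) with hBdef
  have n1 : A * A = 1 := by
    rw [hAdef, ← QuotientGroup.mk_mul, QuotientGroup.eq_one_iff, ← pow_two]
    exact Subgroup.subset_closure (by left; rfl)
  have n2 : B * B = 1 := by
    rw [hBdef, ← QuotientGroup.mk_mul, QuotientGroup.eq_one_iff, ← pow_two]
    exact Subgroup.subset_closure (by right; left; rfl)
  have n8 : (A * B) * (A * B) = 1 := by
    rw [hAdef, hBdef, ← QuotientGroup.mk_mul, ← QuotientGroup.mk_mul,
      QuotientGroup.eq_one_iff, ← pow_two]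
    exact Subgroup.subset_closure (by right; right; rfl)
  have hAi : A⁻¹ = A := inv_eq_of_mul_eq_one_left n1
  have hBi : B⁻¹ = B := inv_eq_of_mul_eq_one_left n2
  have hCi : (A * B)⁻¹ = A * B := inv_eq_of_mul_eq_one_left n8
  have n3 : B * A = A * B := by
    calc B * A = B⁻¹ * A⁻¹ := by rw [hAi, hBi]
    _ = (A * B)⁻¹ := by rw [mul_inv_rev]
    _ = A * B := hCi
  have n4 : A * (A * B) = B := by rw [← mul_assoc, n1, one_mul]
  have n5 : B * (A * B) = A := by rw [← mul_assoc, n3, mul_assoc, n2, mul_one]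
  have n6 : (A * B) * A = B := by rw [mul_assoc, n3, ← mul_assoc, n1, one_mul]
  have n7 : (A * B) * B = A := by rw [mul_assoc, n2, mul_one]
  induction hg using Subgroup.closure_induction with
  | mem t ht =>
    rcases ht with rfl | rfl
    · right; left; rfl
    · right; right; left; rfl
  | one => left; simp
  | mul x y hx hy ihx ihy =>
    rw [QuotientGroup.mk_mul]
    rcases ihx with h | h | h | h <;> rcases ihy with h' | h' | h' | h' <;> rw [h, h'] <;>
      simp [n1, n2, n3, n4, n5, n6, n7, n8]
  | inv x hx ihx =>
    rw [QuotientGroup.mk_inv]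
    rcases ihx with h | h | h | h <;> rw [h] <;> simp [hAi, hBi, hCi]

lemma normal_form (g : Promislow) :
    ∃ z ∈ Zsub, g = z ∨ g = z * px ∨ g = z * py ∨ g = z * (px * py) := by
  rcases quot_mem g with h | h | h | h
  · exact ⟨g, (QuotientGroup.eq_one_iff g).mp h, Or.inl rfl⟩
  · have hm : g⁻¹ * px ∈ Zsub := QuotientGroup.eq.mp h
    refine ⟨g * px⁻¹, ?_, Or.inr (Or.inl ?_)⟩
    · have e : g * px⁻¹ = px * (g⁻¹ * px)⁻¹ * px⁻¹ := by simp [mul_assoc]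
      rw [e]; exact hconj px _ (Zsub.inv_mem hm)
    · simp [mul_assoc]
  · have hm : g⁻¹ * py ∈ Zsub := QuotientGroup.eq.mp h
    refine ⟨g * py⁻¹, ?_, Or.inr (Or.inr (Or.inl ?_))⟩
    · have e : g * py⁻¹ = py * (g⁻¹ * py)⁻¹ * py⁻¹ := by simp [mul_assoc]
      rw [e]; exact hconj py _ (Zsub.inv_mem hm)
    · simp [mul_assoc]
  · rw [← QuotientGroup.mk_mul] at h
    have hm : g⁻¹ * (px * py) ∈ Zsub := QuotientGroup.eq.mp h
    refine ⟨g * (px * py)⁻¹, ?_, Or.inr (Or.inr (Or.inr ?_))⟩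
    · have e : g * (px * py)⁻¹ = (px * py) * (g⁻¹ * (px * py))⁻¹ * (px * py)⁻¹ := by
        simp [mul_assoc]
      rw [e]; exact hconj (px * py) _ (Zsub.inv_mem hm)
    · simp [mul_assoc]

lemma zform : ∀ z ∈ Zsub, ∃ i j k : ℤ,
    z = (px ^ 2) ^ i * (py ^ 2) ^ j * ((px * py) ^ 2) ^ k := by
  have c12 : Commute (px ^ 2) (py ^ 2) := cuv pr2
  have c13 : Commute (px ^ 2) ((px * py) ^ 2) := cuw pr1 pr2
  have c23 : Commute (py ^ 2) ((px * py) ^ 2) := cvw pr1 pr2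
  intro z hz
  induction hz using Subgroup.closure_induction with
  | mem t ht =>
    rcases ht with rfl | rfl | rfl
    · exact ⟨1, 0, 0, by simp⟩
    · exact ⟨0, 1, 0, by simp⟩
    · exact ⟨0, 0, 1, by simp⟩
  | one => exact ⟨0, 0, 0, by simp⟩
  | mul x y hx hy ihx ihy =>
    obtain ⟨i, j, k, rfl⟩ := ihx
    obtain ⟨i', j', k', rfl⟩ := ihy
    exact ⟨i + i', j + j', k + k', triple_mul c12 c13 c23 i j k i' j' k'⟩
  | inv x hx ihx =>
    obtain ⟨i, j, k, rfl⟩ := ihx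
    exact ⟨-i, -j, -k, triple_inv c12 c13 c23 i j k⟩

end PromAux


/-- Let `Γ ⊆ GL(n,ℤ) ⋉ ℤⁿ` be a torsion-free subgroup whose translation subgroup
`{I} × L` (the elements of `Γ` with trivial linear part) is the maximal normal abelian
subgroup of `Γ`.  If `α, β ∈ Γ` have nontrivial linear parts and satisfy
`α²β = βα⁻²` and `β²α = αβ⁻²`, then `⟨α, β⟩` is isomorphic to the Promislow group. -/
theorem promislow_of_relations {n : ℕ} (Γ : Subgroup (Aff n))
    (htf : ∀ g ∈ Γ, g ≠ 1 → ¬ IsOfFinOrder g)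
    (hmax : ∀ H : Subgroup (Aff n), H ≤ Γ →
      (∀ γ ∈ Γ, ∀ x ∈ H, γ * x * γ⁻¹ ∈ H) →
      (∀ x ∈ H, ∀ y ∈ H, x * y = y * x) →
      ∀ x ∈ H, x.lin = 1)
    (α β : Aff n) (hα : α ∈ Γ) (hβ : β ∈ Γ)
    (hα1 : α.lin ≠ 1) (hβ1 : β.lin ≠ 1)
    (hrel1 : α ^ 2 * β = β * α⁻¹ ^ 2) (hrel2 : β ^ 2 * α = α * β⁻¹ ^ 2) :
    Nonempty ((Subgroup.closure {α, β} : Subgroup (Aff n)) ≃* Promislow) := by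
  classical
  have hpow : ∀ g ∈ Γ, g ≠ 1 → ∀ m : ℕ, m ≠ 0 → g ^ m ≠ 1 := by
    intro g hg h1 m hm hgm
    exact htf g hg h1 (isOfFinOrder_iff_pow_eq_one.mpr ⟨m, Nat.pos_of_ne_zero hm, hgm⟩)
  have hzpow : ∀ g ∈ Γ, g ≠ 1 → ∀ m : ℤ, m ≠ 0 → g ^ m ≠ 1 := by
    intro g hg h1 m hm hgm
    exact htf g hg h1 (finOrder_of_zpow hm hgm)
  have hone : (1 : Aff n).lin = 1 := rfl
  have hαne : α ≠ 1 := fun h => hα1 (h ▸ hone)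
  have hβne : β ≠ 1 := fun h => hβ1 (h ▸ hone)
  have hα4 : α ^ (4 : ℕ) ≠ 1 := hpow α hα hαne 4 (by norm_num)
  have hβ4 : β ^ (4 : ℕ) ≠ 1 := hpow β hβ hβne 4 (by norm_num)
  have hαβ : α * β ∈ Γ := Subgroup.mul_mem _ hα hβ
  have hαβne : α * β ≠ 1 := by
    intro h
    have hβeq : β = α⁻¹ := eq_inv_of_mul_eq_one_right h
    subst hβeq
    have h4 : α ^ (4 : ℕ) = 1 := by
      have e2 : α ^ (4 : ℕ) = α * (α * α⁻¹⁻¹ ^ 2) := by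
        simp [pow_succ, pow_two, mul_assoc]
      rw [e2, ← hrel2]
      simp [pow_two, mul_assoc]
    exact hα4 h4
  have huv : Commute (α ^ 2) (β ^ 2) := cuv hrel2
  have huw : Commute (α ^ 2) ((α * β) ^ 2) := cuw hrel1 hrel2
  have hvw : Commute (β ^ 2) ((α * β) ^ 2) := cvw hrel1 hrel2
  have huΓ : α ^ 2 ∈ Γ := pow_mem hα 2
  have hvΓ : β ^ 2 ∈ Γ := pow_mem hβ 2
  have hwΓ : (α * β) ^ 2 ∈ Γ := pow_mem hαβ 2
  have hu1 : α ^ 2 ≠ 1 := fun h => hpow α hα hαne 2 (by norm_num) h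
  have hv1 : β ^ 2 ≠ 1 := fun h => hpow β hβ hβne 2 (by norm_num) h
  have hw1 : (α * β) ^ 2 ≠ 1 := fun h => hpow (α * β) hαβ hαβne 2 (by norm_num) h
  -- independence of the three squares
  have key : ∀ i j k : ℤ, (α ^ 2) ^ i * (β ^ 2) ^ j * ((α * β) ^ 2) ^ k = 1 →
      i = 0 ∧ j = 0 ∧ k = 0 := by
    intro i j k h
    have h2 : (α ^ 2) ^ i * (β ^ 2) ^ (-j) * ((α * β) ^ 2) ^ (-k) = 1 := by
      have hc := congrArg (MulAut.conj α⁻¹) h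
      rw [map_mul, map_mul, map_zpow, map_zpow, map_zpow, map_one] at hc
      have cu : (MulAut.conj α⁻¹) (α ^ 2) = α ^ 2 := by
        simp [MulAut.conj_apply, pow_two, mul_assoc]
      have cv : (MulAut.conj α⁻¹) (β ^ 2) = (β ^ 2)⁻¹ := by
        simpa [MulAut.conj_apply, inv_inv] using e2 hrel2
      have cw : (MulAut.conj α⁻¹) ((α * β) ^ 2) = ((α * β) ^ 2)⁻¹ := by
        simpa [MulAut.conj_apply, inv_inv] using e5 hrel1 hrel2
      rw [cu, cv, cw, inv_zpow', inv_zpow'] at hc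
      exact hc
    have h3 : (α ^ 2) ^ (-i) * (β ^ 2) ^ j * ((α * β) ^ 2) ^ (-k) = 1 := by
      have hc := congrArg (MulAut.conj β⁻¹) h
      rw [map_mul, map_mul, map_zpow, map_zpow, map_zpow, map_one] at hc
      have cu : (MulAut.conj β⁻¹) (α ^ 2) = (α ^ 2)⁻¹ := by
        simpa [MulAut.conj_apply, inv_inv] using e1 hrel1
      have cv : (MulAut.conj β⁻¹) (β ^ 2) = β ^ 2 := by
        simp [MulAut.conj_apply, pow_two, mul_assoc]
      have cw : (MulAut.conj β⁻¹) ((α * β) ^ 2) = ((α * β) ^ 2)⁻¹ := by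
        simpa [MulAut.conj_apply, inv_inv] using e6 hrel1 hrel2
      rw [cu, cv, cw, inv_zpow', inv_zpow'] at hc
      exact hc
    have hj0 : j + -j = 0 := by omega
    have hk0 : k + -k = 0 := by omega
    have hi0 : i + -i = 0 := by omega
    have hcomb := triple_mul huv huw hvw i j k i (-j) (-k)
    rw [h, h2, one_mul, hj0, hk0, zpow_zero, zpow_zero, mul_one, mul_one] at hcomb
    have hi : i = 0 := by
      by_contra h0
      exact hzpow (α ^ 2) huΓ hu1 (i + i) (by omega) hcomb.symm
    have hcomb2 := triple_mul huv huw hvw i j k (-i) j (-k)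
    rw [h, h3, one_mul, hi0, hk0, zpow_zero, zpow_zero, one_mul, mul_one] at hcomb2
    have hj : j = 0 := by
      by_contra h0
      exact hzpow (β ^ 2) hvΓ hv1 (j + j) (by omega) hcomb2.symm
    subst hi; subst hj
    rw [zpow_zero, zpow_zero, one_mul, one_mul] at h
    have hk : k = 0 := by
      by_contra h0
      exact hzpow ((α * β) ^ 2) hwΓ hw1 k h0 h
    exact ⟨rfl, rfl, hk⟩
  -- the homomorphism from the Promislow group
  have hrels : ∀ r ∈ promislowRels, FreeGroup.lift ![α, β] r = 1 := by
    intro r hr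
    simp only [promislowRels, Set.mem_insert_iff, Set.mem_singleton_iff] at hr
    rcases hr with rfl | rfl
    · simp only [map_mul, map_inv, map_pow, FreeGroup.lift_apply_of, Matrix.cons_val_zero,
        Matrix.cons_val_one, Matrix.head_cons]
      calc α⁻¹ * β ^ 2 * α * β ^ 2 = α⁻¹ * (β ^ 2 * α) * β ^ 2 := by simp [mul_assoc]
      _ = α⁻¹ * (α * β⁻¹ ^ 2) * β ^ 2 := by rw [hrel2]
      _ = 1 := by simp [pow_two, mul_assoc]
    · simp only [map_mul, map_inv, map_pow, FreeGroup.lift_apply_of, Matrix.cons_val_zero,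
        Matrix.cons_val_one, Matrix.head_cons]
      calc β⁻¹ * α ^ 2 * β * α ^ 2 = β⁻¹ * (α ^ 2 * β) * α ^ 2 := by simp [mul_assoc]
      _ = β⁻¹ * (β * α⁻¹ ^ 2) * α ^ 2 := by rw [hrel1]
      _ = 1 := by simp [pow_two, mul_assoc]
  set φ : Promislow →* Aff n := PresentedGroup.toGroup hrels with hφdef
  have φx : φ px = α := by
    rw [hφdef]
    show PresentedGroup.toGroup hrels (PresentedGroup.of 0) = α
    rw [PresentedGroup.toGroup.of]
    simp
  have φy : φ py = β := by
    rw [hφdef]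
    show PresentedGroup.toGroup hrels (PresentedGroup.of 1) = β
    rw [PresentedGroup.toGroup.of]
    simp
  have hinj : Function.Injective φ := by
    rw [injective_iff_map_eq_one]
    intro g hg
    obtain ⟨z, hz, hcase⟩ := PromAux.normal_form g
    obtain ⟨i, j, k, rfl⟩ := PromAux.zform z hz
    have hφz : φ ((px ^ 2) ^ i * (py ^ 2) ^ j * ((px * py) ^ 2) ^ k)
        = (α ^ 2) ^ i * (β ^ 2) ^ j * ((α * β) ^ 2) ^ k := by
      rw [map_mul, map_mul, map_zpow, map_zpow, map_zpow, map_pow, map_pow, map_pow,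
        map_mul, φx, φy]
    rcases hcase with rfl | rfl | rfl | rfl
    · rw [hφz] at hg
      obtain ⟨hi, hj, hk⟩ := key i j k hg
      subst hi; subst hj; subst hk
      simp
    · exfalso
      rw [map_mul, hφz, φx] at hg
      have hαinv : α = ((α ^ 2) ^ i * (β ^ 2) ^ j * ((α * β) ^ 2) ^ k)⁻¹ :=
        eq_inv_of_mul_eq_one_right hg
      have hcomm : Commute ((α ^ 2) ^ i * (β ^ 2) ^ j * ((α * β) ^ 2) ^ k) (β ^ 2) :=
        ((huv.zpow_left i).mul_left ((Commute.refl (β ^ 2)).zpow_left j)).mul_left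
          (hvw.symm.zpow_left k)
      have hcα : Commute α (β ^ 2) := by rw [hαinv]; exact hcomm.inv_left
      have h1 : α⁻¹ * β ^ 2 * α = β ^ 2 := by
        have hx := hcα.inv_left.eq
        calc α⁻¹ * β ^ 2 * α = (α⁻¹ * β ^ 2) * α := rfl
        _ = (β ^ 2 * α⁻¹) * α := by rw [hx]
        _ = β ^ 2 := by simp [mul_assoc]
      have hv2 : β ^ 2 = (β ^ 2)⁻¹ := h1.symm.trans (e2 hrel2)
      have h41 : β ^ (4 : ℕ) = 1 := by
        have e : β ^ (4 : ℕ) = β ^ 2 * β ^ 2 := by rw [← pow_add]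
        rw [e]
        exact mul_eq_one_iff_eq_inv.mpr hv2
      exact hβ4 h41
    · exfalso
      rw [map_mul, hφz, φy] at hg
      have hβinv : β = ((α ^ 2) ^ i * (β ^ 2) ^ j * ((α * β) ^ 2) ^ k)⁻¹ :=
        eq_inv_of_mul_eq_one_right hg
      have hcomm : Commute ((α ^ 2) ^ i * (β ^ 2) ^ j * ((α * β) ^ 2) ^ k) (α ^ 2) :=
        (((Commute.refl (α ^ 2)).zpow_left i).mul_left (huv.symm.zpow_left j)).mul_left
          (huw.symm.zpow_left k)
      have hcβ : Commute β (α ^ 2) := by rw [hβinv]; exact hcomm.inv_left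
      have h1 : β⁻¹ * α ^ 2 * β = α ^ 2 := by
        have hx := hcβ.inv_left.eq
        calc β⁻¹ * α ^ 2 * β = (β⁻¹ * α ^ 2) * β := rfl
        _ = (α ^ 2 * β⁻¹) * β := by rw [hx]
        _ = α ^ 2 := by simp [mul_assoc]
      have hu2 : α ^ 2 = (α ^ 2)⁻¹ := h1.symm.trans (e1 hrel1)
      have h41 : α ^ (4 : ℕ) = 1 := by
        have e : α ^ (4 : ℕ) = α ^ 2 * α ^ 2 := by rw [← pow_add]
        rw [e]
        exact mul_eq_one_iff_eq_inv.mpr hu2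
      exact hα4 h41
    · exfalso
      rw [map_mul, hφz, map_mul, φx, φy] at hg
      have hg' : (α ^ 2) ^ i * (β ^ 2) ^ j * ((α * β) ^ 2) ^ k * (α * β) = 1 := by
        exact hg
      have hαβinv : α * β = ((α ^ 2) ^ i * (β ^ 2) ^ j * ((α * β) ^ 2) ^ k)⁻¹ :=
        eq_inv_of_mul_eq_one_right hg'
      have hcomm : Commute ((α ^ 2) ^ i * (β ^ 2) ^ j * ((α * β) ^ 2) ^ k) (α ^ 2) :=
        (((Commute.refl (α ^ 2)).zpow_left i).mul_left (huv.symm.zpow_left j)).mul_left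
          (huw.symm.zpow_left k)
      have hcαβ : Commute (α * β) (α ^ 2) := by rw [hαβinv]; exact hcomm.inv_left
      have h1 : (α * β)⁻¹ * α ^ 2 * (α * β) = α ^ 2 := by
        have hx := hcαβ.inv_left.eq
        calc (α * β)⁻¹ * α ^ 2 * (α * β) = ((α * β)⁻¹ * α ^ 2) * (α * β) := rfl
        _ = (α ^ 2 * (α * β)⁻¹) * (α * β) := by rw [hx]
        _ = α ^ 2 := by simp [mul_assoc]
      have hu2 : α ^ 2 = (α ^ 2)⁻¹ := h1.symm.trans (cab2 hrel1)
      have h41 : α ^ (4 : ℕ) = 1 := by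
        have e : α ^ (4 : ℕ) = α ^ 2 * α ^ 2 := by rw [← pow_add]
        rw [e]
        exact mul_eq_one_iff_eq_inv.mpr hu2
      exact hα4 h41
  have hrange : φ.range = Subgroup.closure {α, β} := by
    rw [MonoidHom.range_eq_map, ← PromAux.gen_top, MonoidHom.map_closure, Set.image_pair,
      φx, φy]
  exact ⟨(MulEquiv.subgroupCongr hrange.symm).trans (MonoidHom.ofInjective hinj).symm⟩
end

section
/- Let Γ be a torsion-free group with maximal normal abelian subgroup {I}×L ≅ ℤⁿ in GL(n,ℤ) ⋉ ℤⁿ, π the projection to the linear part. If α = (A,a) and β = (B,b) in Γ generate a subgroup isomorphic to the Promislow group P = ⟨x, y | x⁻¹y²x = y⁻², y⁻¹x²y = x⁻²⟩ (with α, β corresponding to x, y), then A ≠ I, B ≠ I, and A, B satisfy A²B = BA⁻² and B²A = AB⁻². -/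
namespace Aff

variable {n : ℕ}

@[simp] lemma mul_lin (p q : Aff n) : (p * q).lin = p.lin * q.lin := rfl
@[simp] lemma one_lin : (1 : Aff n).lin = 1 := rfl
@[simp] lemma inv_lin (p : Aff n) : (p⁻¹).lin = p.lin⁻¹ := rfl

/-- The projection to the linear part, as a monoid homomorphism. -/
def linHom : Aff n →* Matrix.GeneralLinearGroup (Fin n) ℤ where
  toFun := Aff.lin
  map_one' := rfl
  map_mul' _ _ := rfl

@[simp] lemma linHom_apply (p : Aff n) :
    (linHom p : Matrix.GeneralLinearGroup (Fin n) ℤ) = p.lin := rfl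

/-- Two translations (elements with trivial linear part) commute. -/
lemma mul_comm_of_lin_eq_one {p q : Aff n} (hp : p.lin = 1) (hq : q.lin = 1) :
    p * q = q * p := by
  show mul' p q = mul' q p
  unfold mul'
  rw [hp, hq]
  simp [add_comm]

instance : DecidableEq (Aff n) := fun p q =>
  decidable_of_iff (p.lin = q.lin ∧ p.vec = q.vec) (by cases p; cases q; simp)

end Aff

/-- Linear part of the generator `x` in the standard affine realization of `P`. -/
def PDx : Matrix.GeneralLinearGroup (Fin 3) ℤ :=
  ⟨!![1,0,0;0,-1,0;0,0,-1], !![1,0,0;0,-1,0;0,0,-1], by decide, by decide⟩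

/-- Linear part of the generator `y` in the standard affine realization of `P`. -/
def PDy : Matrix.GeneralLinearGroup (Fin 3) ℤ :=
  ⟨!![-1,0,0;0,1,0;0,0,-1], !![-1,0,0;0,1,0;0,0,-1], by decide, by decide⟩

/-- The generator `x` realized in `GL(3,ℤ) ⋉ ℤ³`. -/
def PX : Aff 3 := ⟨PDx, ![1,0,0]⟩

/-- The generator `y` realized in `GL(3,ℤ) ⋉ ℤ³`. -/
def PY : Aff 3 := ⟨PDy, ![0,1,0]⟩

lemma promislow_rels_hold : ∀ r ∈ promislowRels,
    FreeGroup.lift (![PX, PY] : Fin 2 → Aff 3) r = 1 := by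
  intro r hr
  simp only [promislowRels, Set.mem_insert_iff, Set.mem_singleton_iff] at hr
  rcases hr with rfl | rfl
  · simp only [map_mul, map_inv, map_pow, FreeGroup.lift_apply_of, Matrix.cons_val_zero,
      Matrix.cons_val_one, Matrix.head_cons]
    have key : PY ^ 2 * PX * PY ^ 2 = PX := by decide
    calc PX⁻¹ * PY ^ 2 * PX * PY ^ 2 = PX⁻¹ * (PY ^ 2 * PX * PY ^ 2) := by
          simp [mul_assoc]
      _ = PX⁻¹ * PX := by rw [key]
      _ = 1 := inv_mul_cancel PX
  · simp only [map_mul, map_inv, map_pow, FreeGroup.lift_apply_of, Matrix.cons_val_zero,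
      Matrix.cons_val_one, Matrix.head_cons]
    have key : PX ^ 2 * PY * PX ^ 2 = PY := by decide
    calc PY⁻¹ * PX ^ 2 * PY * PX ^ 2 = PY⁻¹ * (PX ^ 2 * PY * PX ^ 2) := by
          simp [mul_assoc]
      _ = PY⁻¹ * PY := by rw [key]
      _ = 1 := inv_mul_cancel PY

/-- The standard affine representation of the Promislow group. -/
noncomputable def promRho : Promislow →* Aff 3 := PresentedGroup.toGroup promislow_rels_hold

lemma promRho_x : promRho px = PX := PresentedGroup.toGroup.of promislow_rels_hold
lemma promRho_y : promRho py = PY := PresentedGroup.toGroup.of promislow_rels_hold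

/-- In the Promislow group, `xyx ≠ y`. -/
lemma prom_xyx_ne : px * py * px ≠ py := by
  intro h
  have h2 := congrArg promRho h
  simp only [map_mul, promRho_x, promRho_y] at h2
  exact absurd h2 (by decide)

/-- In the Promislow group, `yxy ≠ x`. -/
lemma prom_yxy_ne : py * px * py ≠ px := by
  intro h
  have h2 := congrArg promRho h
  simp only [map_mul, promRho_x, promRho_y] at h2
  exact absurd h2 (by decide)

lemma prom_rel1 : px⁻¹ * py ^ 2 * px * py ^ 2 = (1 : Promislow) := by
  have h : ((FreeGroup.of 0)⁻¹ * (FreeGroup.of 1) ^ 2 * FreeGroup.of 0 * (FreeGroup.of 1) ^ 2)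
      ∈ Subgroup.normalClosure promislowRels :=
    Subgroup.subset_normalClosure (by left; rfl)
  have e : px⁻¹ * py ^ 2 * px * py ^ 2 = PresentedGroup.mk promislowRels
      ((FreeGroup.of 0)⁻¹ * (FreeGroup.of 1) ^ 2 * FreeGroup.of 0 * (FreeGroup.of 1) ^ 2) := by
    simp [px, py, PresentedGroup.of, map_mul, map_inv, map_pow]
  rw [e]
  exact (QuotientGroup.eq_one_iff _).mpr h

lemma prom_rel2 : py⁻¹ * px ^ 2 * py * px ^ 2 = (1 : Promislow) := by
  have h : ((FreeGroup.of 1)⁻¹ * (FreeGroup.of 0) ^ 2 * FreeGroup.of 1 * (FreeGroup.of 0) ^ 2)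
      ∈ Subgroup.normalClosure promislowRels :=
    Subgroup.subset_normalClosure (by right; rfl)
  have e : py⁻¹ * px ^ 2 * py * px ^ 2 = PresentedGroup.mk promislowRels
      ((FreeGroup.of 1)⁻¹ * (FreeGroup.of 0) ^ 2 * FreeGroup.of 1 * (FreeGroup.of 0) ^ 2) := by
    simp [px, py, PresentedGroup.of, map_mul, map_inv, map_pow]
  rw [e]
  exact (QuotientGroup.eq_one_iff _).mpr h

/-- Let `Γ ⊆ GL(n,ℤ) ⋉ ℤⁿ` be a torsion-free subgroup whose translation subgroup is the
maximal normal abelian subgroup of `Γ`.  If `α = (A,a)` and `β = (B,b)` in `Γ` generate a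
subgroup isomorphic to the Promislow group `P` (with `α, β` corresponding to the
generators `x, y`), then `A ≠ I`, `B ≠ I`, and `A²B = BA⁻²`, `B²A = AB⁻²`. -/
theorem promislow_gens_conditions {n : ℕ} (Γ : Subgroup (Aff n))
    (htf : ∀ g ∈ Γ, g ≠ 1 → ¬ IsOfFinOrder g)
    (hmax : ∀ H : Subgroup (Aff n), H ≤ Γ →
      (∀ γ ∈ Γ, ∀ x ∈ H, γ * x * γ⁻¹ ∈ H) →
      (∀ x ∈ H, ∀ y ∈ H, x * y = y * x) →
      ∀ x ∈ H, x.lin = 1)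
    (α β : Aff n) (hα : α ∈ Γ) (hβ : β ∈ Γ)
    (φ : Promislow →* Aff n) (hinj : Function.Injective φ)
    (hφx : φ px = α) (hφy : φ py = β) :
    α.lin ≠ 1 ∧ β.lin ≠ 1 ∧
      α.lin ^ 2 * β.lin = β.lin * α.lin⁻¹ ^ 2 ∧
      β.lin ^ 2 * α.lin = α.lin * β.lin⁻¹ ^ 2 := by
  -- transfer the relators to `Aff n` via `φ`
  have h1 : α⁻¹ * β ^ 2 * α * β ^ 2 = 1 := by
    have := congrArg φ prom_rel1
    simpa [map_mul, map_inv, map_pow, map_one, hφx, hφy] using this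
  have h2 : β⁻¹ * α ^ 2 * β * α ^ 2 = 1 := by
    have := congrArg φ prom_rel2
    simpa [map_mul, map_inv, map_pow, map_one, hφx, hφy] using this
  have l1 : α.lin⁻¹ * β.lin ^ 2 * α.lin * β.lin ^ 2 = 1 := by
    have := congrArg Aff.linHom h1
    simpa [map_mul, map_inv, map_pow, map_one] using this
  have l2 : β.lin⁻¹ * α.lin ^ 2 * β.lin * α.lin ^ 2 = 1 := by
    have := congrArg Aff.linHom h2
    simpa [map_mul, map_inv, map_pow, map_one] using this
  refine ⟨?_, ?_, ?_, ?_⟩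
  · -- `α.lin ≠ 1`
    intro hA
    set γ : Aff n := β⁻¹ * α * β with hγ
    have hγlin : γ.lin = 1 := by simp [hγ, hA]
    have hcomm : α * γ = γ * α := Aff.mul_comm_of_lin_eq_one hA hγlin
    have hA2 : (α ^ 2).lin = 1 := by rw [sq]; simp [hA]
    have hγ2lin : (β⁻¹ * α ^ 2 * β).lin = 1 := by simp [hA2]
    have hγsq : γ ^ 2 = β⁻¹ * α ^ 2 * β := by rw [hγ, sq, sq]; group
    have hc2 : α ^ 2 * γ ^ 2 = 1 := by
      rw [hγsq, Aff.mul_comm_of_lin_eq_one hA2 hγ2lin]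
      exact h2
    have hfin : (α * γ) ^ 2 = 1 := by
      rw [(show Commute α γ from hcomm).mul_pow]
      exact hc2
    have hmem : α * γ ∈ Γ :=
      Γ.mul_mem hα (Γ.mul_mem (Γ.mul_mem (Γ.inv_mem hβ) hα) hβ)
    have e : α * γ = 1 := by
      by_contra hne
      exact htf _ hmem hne (isOfFinOrder_iff_pow_eq_one.mpr ⟨2, by norm_num, hfin⟩)
    have t : β⁻¹ * α * β = α⁻¹ := eq_inv_of_mul_eq_one_right e
    have hab : α * (β * α) = β := by
      have := congrArg (fun g => β * g * α) t
      simpa [mul_assoc] using this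
    have : px * py * px = py := by
      apply hinj
      rw [map_mul, map_mul, hφx, hφy]
      simpa [mul_assoc] using hab
    exact absurd this prom_xyx_ne
  · -- `β.lin ≠ 1`
    intro hB
    set δ : Aff n := α⁻¹ * β * α with hδ
    have hδlin : δ.lin = 1 := by simp [hδ, hB]
    have hcomm : β * δ = δ * β := Aff.mul_comm_of_lin_eq_one hB hδlin
    have hB2 : (β ^ 2).lin = 1 := by rw [sq]; simp [hB]
    have hδ2lin : (α⁻¹ * β ^ 2 * α).lin = 1 := by simp [hB2]
    have hδsq : δ ^ 2 = α⁻¹ * β ^ 2 * α := by rw [hδ, sq, sq]; group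
    have hc2 : β ^ 2 * δ ^ 2 = 1 := by
      rw [hδsq, Aff.mul_comm_of_lin_eq_one hB2 hδ2lin]
      exact h1
    have hfin : (β * δ) ^ 2 = 1 := by
      rw [(show Commute β δ from hcomm).mul_pow]
      exact hc2
    have hmem : β * δ ∈ Γ :=
      Γ.mul_mem hβ (Γ.mul_mem (Γ.mul_mem (Γ.inv_mem hα) hβ) hα)
    have e : β * δ = 1 := by
      by_contra hne
      exact htf _ hmem hne (isOfFinOrder_iff_pow_eq_one.mpr ⟨2, by norm_num, hfin⟩)
    have t : α⁻¹ * β * α = β⁻¹ := eq_inv_of_mul_eq_one_right e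
    have hab : β * (α * β) = α := by
      have := congrArg (fun g => α * g * β) t
      simpa [mul_assoc] using this
    have : py * px * py = px := by
      apply hinj
      rw [map_mul, map_mul, hφx, hφy]
      simpa [mul_assoc] using hab
    exact absurd this prom_yxy_ne
  · -- `A²B = BA⁻²`
    have h : β.lin⁻¹ * α.lin ^ 2 * β.lin = (α.lin ^ 2)⁻¹ := mul_eq_one_iff_eq_inv.mp l2
    calc α.lin ^ 2 * β.lin = β.lin * (β.lin⁻¹ * α.lin ^ 2 * β.lin) := by group
      _ = β.lin * α.lin⁻¹ ^ 2 := by rw [h, inv_pow]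
  · -- `B²A = AB⁻²`
    have h : α.lin⁻¹ * β.lin ^ 2 * α.lin = (β.lin ^ 2)⁻¹ := mul_eq_one_iff_eq_inv.mp l1
    calc β.lin ^ 2 * α.lin = α.lin * (α.lin⁻¹ * β.lin ^ 2 * α.lin) := by group
      _ = α.lin * β.lin⁻¹ ^ 2 := by rw [h, inv_pow]
end

section
/- Let I be an ideal of a skew left brace A. Define R_0(I,A) = I and R_{n+1}(I,A) as the additive subgroup generated by R_n(I,A)*A and [R_n(I,A), A]_+. Then R_{n+1}(I,A) ⊆ R_n(I,A) for all n ≥ 0, and each R_n(I,A) is an ideal of A. -/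
/-- A skew left brace: `(A,+)` and `(A,*)` are groups (the multiplicative
operation `*` plays the role of the circle operation `∘`) satisfying
`a ∘ (b + c) = a ∘ b - a + a ∘ c`. -/
class SkewBrace (A : Type*) extends AddGroup A, Group A where
  compat : ∀ a b c : A, a * (b + c) = a * b - a + a * c

/-- The lambda map of a skew brace: `λ_a(b) = -a + a ∘ b`. -/
def lam {A : Type*} [SkewBrace A] (a b : A) : A := -a + a * b

/-- The star operation of a skew brace: `a * b := λ_a(b) - b`. -/
def starB {A : Type*} [SkewBrace A] (a b : A) : A := lam a b - b

/-- `X * Y`: the additive subgroup generated by `{x * y : x ∈ X, y ∈ Y}`. -/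
def starSet {A : Type*} [SkewBrace A] (X Y : Set A) : AddSubgroup A :=
  AddSubgroup.closure {z : A | ∃ x ∈ X, ∃ y ∈ Y, z = starB x y}

/-- `[X, Y]_+`: the additive subgroup generated by additive commutators. -/
def commSet {A : Type*} [SkewBrace A] (X Y : Set A) : AddSubgroup A :=
  AddSubgroup.closure {z : A | ∃ x ∈ X, ∃ y ∈ Y, z = x + y - x - y}

/-- An ideal of a skew left brace: a `λ`-stable subgroup of `(A,+)` that is normal in
`(A,+)` and normal in `(A,∘)`. -/
def IsIdeal {A : Type*} [SkewBrace A] (I : AddSubgroup A) : Prop :=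
  (∀ a : A, ∀ x ∈ I, lam a x ∈ I) ∧
  (∀ a : A, ∀ x ∈ I, a + x - a ∈ I) ∧
  (∀ a : A, ∀ x ∈ I, a * x * a⁻¹ ∈ I)

/-- The series `R_0(I,A) = I`, `R_{n+1}(I,A) = ⟨R_n(I,A) * A, [R_n(I,A), A]_+⟩`. -/
def Rseq {A : Type*} [SkewBrace A] (I : AddSubgroup A) : ℕ → AddSubgroup A
  | 0 => I
  | n + 1 => starSet (Rseq I n) Set.univ ⊔ commSet (Rseq I n) Set.univ


section Aux
variable {A : Type*} [SkewBrace A]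

lemma sb_mul_zero (a : A) : a * 0 = a := by
  have h := SkewBrace.compat a 0 0
  rw [add_zero] at h
  have h2 : a * 0 + 0 = a * 0 + (-a + a * 0) := by
    rw [add_zero]; nth_rewrite 1 [h]; rw [sub_eq_add_neg, add_assoc]
  have h3 : -a + a * 0 = 0 := (add_left_cancel h2).symm
  exact (neg_add_eq_zero.mp h3).symm

lemma lam_zero (a : A) : lam a 0 = 0 := by simp [lam, sb_mul_zero]

lemma lam_add (a b c : A) : lam a (b + c) = lam a b + lam a c := by
  simp [lam, SkewBrace.compat, sub_eq_add_neg, add_assoc]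

/-- `lam a` as an additive homomorphism. -/
def lamHom (a : A) : A →+ A where
  toFun := lam a
  map_zero' := lam_zero a
  map_add' := lam_add a

@[simp] lemma lamHom_apply (a b : A) : lamHom a b = lam a b := rfl

lemma sb_one_eq_zero : (1 : A) = 0 := by
  have h := sb_mul_zero (1 : A)
  rw [one_mul] at h
  exact h.symm

lemma lam_neg (a b : A) : lam a (-b) = -(lam a b) := by
  have h := lam_add a (-b) b
  rw [neg_add_cancel, lam_zero] at h
  exact eq_neg_of_add_eq_zero_left h.symm

lemma lam_sub (a b c : A) : lam a (b - c) = lam a b - lam a c := by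
  rw [sub_eq_add_neg, lam_add, lam_neg, ← sub_eq_add_neg]

lemma mul_eq_add_lam (a b : A) : a * b = a + lam a b := by simp [lam]

lemma lam_mul (a b c : A) : lam (a * b) c = lam a (lam b c) := by
  have h1 : a * (b * c) = a * b + lam (a * b) c := by
    rw [← mul_assoc]; exact mul_eq_add_lam _ _
  have h2 : a * (b * c) = a * b + lam a (lam b c) := by
    rw [mul_eq_add_lam b c, SkewBrace.compat, mul_eq_add_lam a (lam b c)]
    simp [sub_eq_add_neg, add_assoc]
  exact add_left_cancel (h1.symm.trans h2)

lemma mul_eq_add_star (a b : A) : a * b = a + starB a b + b := by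
  simp [starB, mul_eq_add_lam, sub_eq_add_neg, add_assoc]

/-- `I * A ⊆ I` for an ideal `I`. -/
lemma ideal_starB {J : AddSubgroup A} (hJ : IsIdeal J) {x : A} (hx : x ∈ J) (a : A) :
    starB x a ∈ J := by
  obtain ⟨hlam, hadd, hmul⟩ := hJ
  have hy : a⁻¹ * x * a ∈ J := by simpa using hmul a⁻¹ x hx
  have hxa : x * a = a + lam a (a⁻¹ * x * a) := by
    rw [← mul_eq_add_lam]; group
  have hrw : starB x a = -x + (a + lam a (a⁻¹ * x * a) + -a) := by
    rw [starB, lam, hxa]; simp [sub_eq_add_neg, add_assoc]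
  rw [hrw]
  refine J.add_mem (J.neg_mem hx) ?_
  have := hadd a _ (hlam a _ hy)
  simpa [sub_eq_add_neg] using this

/-- `[I, A]_+ ⊆ I` for `I` normal in `(A,+)`. -/
lemma ideal_comm {J : AddSubgroup A} (hJ : IsIdeal J) {x : A} (hx : x ∈ J) (a : A) :
    x + a - x - a ∈ J := by
  have h1 : a + (-x) - a ∈ J := hJ.2.1 a _ (J.neg_mem hx)
  have hrw : x + a - x - a = x + (a + -x + -a) := by
    simp [sub_eq_add_neg, add_assoc]
  rw [hrw]
  exact J.add_mem hx (by simpa [sub_eq_add_neg, add_assoc] using h1)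

lemma lam_starB (a x b : A) : lam a (starB x b) = starB (a * x * a⁻¹) (lam a b) := by
  have h1 : lam a (starB x b) = lam a (lam x b) - lam a b := by
    rw [starB, lam_sub]
  have h2 : a * x = a * x * a⁻¹ * a := by group
  have h3 : lam (a * x) b = lam (a * x * a⁻¹) (lam a b) := by
    conv_lhs => rw [h2]
    rw [lam_mul]
  rw [h1, ← lam_mul, h3, starB]

lemma lam_commutator (a x b : A) :
    lam a (x + b - x - b) = lam a x + lam a b - lam a x - lam a b := by
  rw [lam_sub, lam_sub, lam_add]

/-- The key conjugation identity. -/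
lemma conj_eq (a x : A) :
    a * x * a⁻¹ = a + (starB a x + x + lam a (starB x a⁻¹)) - a := by
  have e1 : a * x * a⁻¹ = a * x + starB (a * x) a⁻¹ + a⁻¹ := mul_eq_add_star _ _
  have e2 : a * x = a + starB a x + x := mul_eq_add_star _ _
  have e0 : (0 : A) = a + starB a a⁻¹ + a⁻¹ := by
    have h := mul_eq_add_star a a⁻¹
    rwa [mul_inv_cancel, sb_one_eq_zero] at h
  have e3 : (a⁻¹ : A) = -(starB a a⁻¹) + -a := by
    have := congrArg (fun z => -(starB a a⁻¹) + (-a + z)) e0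
    simpa [add_assoc] using this.symm
  have e4 : starB (a * x) a⁻¹ + -(starB a a⁻¹) = lam a (starB x a⁻¹) := by
    have h5 : starB (a * x) a⁻¹ + -(starB a a⁻¹) = lam (a * x) a⁻¹ - lam a a⁻¹ := by
      simp [starB, sub_eq_add_neg, add_assoc]
    rw [h5, lam_mul, ← lam_sub, starB]
  calc a * x * a⁻¹ = a + starB a x + x + starB (a * x) a⁻¹ + (-(starB a a⁻¹) + -a) := by
        rw [e1, ← e3, ← e2]
    _ = a + starB a x + x + (starB (a * x) a⁻¹ + -(starB a a⁻¹)) + -a := by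
        simp [add_assoc]
    _ = a + (starB a x + x + lam a (starB x a⁻¹)) - a := by
        rw [e4]; simp [sub_eq_add_neg, add_assoc]

/-- One step of the series stays inside an ideal. -/
lemma step_le {J : AddSubgroup A} (hJ : IsIdeal J) :
    starSet (J : Set A) Set.univ ⊔ commSet (J : Set A) Set.univ ≤ J := by
  apply sup_le
  · rw [starSet]
    refine (AddSubgroup.closure_le _).mpr ?_
    rintro z ⟨x, hx, y, -, rfl⟩
    exact ideal_starB hJ hx y
  · rw [commSet]
    refine (AddSubgroup.closure_le _).mpr ?_
    rintro z ⟨x, hx, y, -, rfl⟩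
    exact ideal_comm hJ hx y

/-- One step of the series applied to an ideal is an ideal. -/
lemma step_ideal {J : AddSubgroup A} (hJ : IsIdeal J) :
    IsIdeal (starSet (J : Set A) Set.univ ⊔ commSet (J : Set A) Set.univ) := by
  set K := starSet (J : Set A) Set.univ ⊔ commSet (J : Set A) Set.univ with hK
  have hKJ : K ≤ J := step_le hJ
  have memS : ∀ x ∈ J, ∀ b : A, starB x b ∈ K := fun x hx b =>
    le_sup_left (α := AddSubgroup A) (AddSubgroup.subset_closure ⟨x, hx, b, trivial, rfl⟩)
  have memC : ∀ x ∈ J, ∀ b : A, x + b - x - b ∈ K := fun x hx b =>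
    le_sup_right (α := AddSubgroup A) (AddSubgroup.subset_closure ⟨x, hx, b, trivial, rfl⟩)
  have hlamK : ∀ a : A, ∀ x ∈ K, lam a x ∈ K := by
    intro a
    have hle : K ≤ AddSubgroup.comap (lamHom a) K := by
      rw [hK]
      apply sup_le
      · rw [starSet]
        refine (AddSubgroup.closure_le _).mpr ?_
        rintro z ⟨x, hx, b, -, rfl⟩
        show lam a (starB x b) ∈ K
        rw [lam_starB]
        exact memS _ (hJ.2.2 a x hx) _
      · rw [commSet]
        refine (AddSubgroup.closure_le _).mpr ?_
        rintro z ⟨x, hx, b, -, rfl⟩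
        show lam a (x + b - x - b) ∈ K
        rw [lam_commutator]
        exact memC _ (hJ.1 a x hx) _
    exact fun x hx => hle hx
  have haddK : ∀ a : A, ∀ x ∈ K, a + x - a ∈ K := by
    intro a x hx
    have h1 : (-x) + a - (-x) - a ∈ K := memC _ (J.neg_mem (hKJ hx)) a
    have hrw : a + x - a = x + ((-x) + a - (-x) - a) := by
      simp [sub_eq_add_neg, add_assoc]
    rw [hrw]
    exact K.add_mem hx h1
  have hmulK : ∀ a : A, ∀ x ∈ K, a * x * a⁻¹ ∈ K := by
    intro a x hx
    rw [conj_eq]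
    apply haddK
    refine K.add_mem (K.add_mem ?_ hx) ?_
    · have hs : starB a x = lam a x - x := rfl
      rw [hs]; exact K.sub_mem (hlamK a x hx) hx
    · exact hlamK a _ (memS x (hKJ hx) a⁻¹)
  exact ⟨hlamK, haddK, hmulK⟩

end Aux

/-- If `I` is an ideal of a skew left brace `A`, then `R_{n+1}(I,A) ⊆ R_n(I,A)` and
each `R_n(I,A)` is an ideal of `A`. -/
theorem Rseq_ideal {A : Type*} [SkewBrace A] (I : AddSubgroup A) (hI : IsIdeal I) (n : ℕ) :
    Rseq I (n + 1) ≤ Rseq I n ∧ IsIdeal (Rseq I n) := by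
  induction n with
  | zero => exact ⟨step_le hI, hI⟩
  | succ n ih =>
    have hid : IsIdeal (Rseq I (n + 1)) := by
      rw [show Rseq I (n + 1) = starSet (Rseq I n : Set A) Set.univ ⊔
        commSet (Rseq I n : Set A) Set.univ from rfl]
      exact step_ideal ih.2
    exact ⟨step_le hid, hid⟩
end

section
/- Let A be a finite skew left brace with nilpotent additive group, and suppose the multiplicative group (A,∘) has a normal Sylow p-subgroup for some prime p dividing |A|. Then the Sylow p-subgroup A_p of (A,+) is an ideal of A and Soc(A_p) = Soc(A) ∩ A_p; in particular Soc(A_p) is an ideal of A. -/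
/-!
Each `λ_a` is an additive automorphism, so the set `A_p` of elements of `p`-power additive order
is a left ideal. A left ideal is a subgroup of `(A, ∘)`; having the order of a Sylow subgroup,
`A_p` equals the normal Sylow subgroup `P`, hence is an ideal.

For the socle, write `b = b_p + b_{p'}` with `b_p ∈ A_p` and `b_{p'}` of order prime to `p`.
In the nilpotent group `(A, +)`, `p`-elements commute with `p'`-elements, so it remains to see
that `x ∈ A_p` fixes every `p'`-element `y` under `λ`. Expanding `x ∘ y = y ∘ (y⁻¹ ∘ x ∘ y)`
additively shows `y - λ_x(y) ∈ A_p`; it commutes with the `p'`-element `λ_x(y)`, so it is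
itself a `p'`-element, hence `0`.
-/

theorem IsPGroup.eq_one_of_pow_eq_one {p : ℕ} {G : Type*} [Group G] (hG : IsPGroup p G)
    {n : ℕ} (hn : p.Coprime n) {g : G} (hg : g ^ n = 1) : g = 1 :=
  (hG.powEquiv hn).injective (by simp [hg])

section FiniteGroup

variable {G : Type*} [Group G] [Finite G]

theorem Sylow.mem_iff_exists_pow_eq_one {p : ℕ} [Fact p.Prime] (P : Sylow p G)
    [(P : Subgroup G).Normal] {g : G} : g ∈ P ↔ ∃ k : ℕ, g ^ p ^ k = 1 := by
  refine ⟨fun hg => ?_, fun ⟨k, hk⟩ => ?_⟩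
  · obtain ⟨k, hk⟩ := P.isPGroup' ⟨g, hg⟩
    exact ⟨k, by simpa using congrArg Subtype.val hk⟩
  · have hpg : IsPGroup p (Subgroup.zpowers g) :=
      IsPGroup.of_card_dvd_pow (n := k)
        (by rw [Nat.card_zpowers]; exact orderOf_dvd_of_pow_eq_one hk)
    obtain ⟨Q, hQ⟩ := hpg.exists_le_sylow
    have := Sylow.unique_of_normal P ‹_›
    exact Subsingleton.elim Q P ▸ hQ (Subgroup.mem_zpowers g)

variable [Group.IsNilpotent G]

theorem commute_of_pow_eq_one_of_coprime {x y : G} {m n : ℕ} (hmn : m.Coprime n)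
    (hx : x ^ m = 1) (hy : y ^ n = 1) : Commute x y := by
  obtain ⟨e⟩ := (Group.isNilpotent_of_finite_tfae (G := G)).out 0 4 |>.mp ‹_›
  -- in each factor of `G ≃* ∏ q, Sylow q G`, one of the two components is trivial
  have component_eq_one : ∀ {z : G} {k : ℕ}, z ^ k = 1 →
      ∀ (q : (Nat.card G).primeFactors) (P : Sylow q G), ¬ (q : ℕ) ∣ k →
      e.symm z q P = 1 := by
    intro z k hz q P hq
    have := Fact.mk (Nat.prime_of_mem_primeFactors q.2)
    refine P.isPGroup'.eq_one_of_pow_eq_one ((Nat.Prime.coprime_iff_not_dvd this.out).2 hq) ?_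
    rw [← Pi.pow_apply, ← Pi.pow_apply, ← map_pow, hz, map_one]
    rfl
  suffices Commute (e.symm x) (e.symm y) by simpa using this.map e
  refine Pi.commute_iff.2 fun q => Pi.commute_iff.2 fun P => ?_
  by_cases hq : (q : ℕ) ∣ m
  · have hqn : ¬ (q : ℕ) ∣ n := fun h =>
      (Nat.prime_of_mem_primeFactors q.2).one_lt.ne' (Nat.eq_one_of_dvd_coprimes hmn hq h)
    rw [component_eq_one hy q P hqn]
    exact Commute.one_right _
  · rw [component_eq_one hx q P hq]
    exact Commute.one_left _

theorem eq_one_of_pow_eq_one_of_mul_pow_eq_one {x y : G} {m n : ℕ} (hmn : m.Coprime n)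
    (hx : x ^ m = 1) (hy : y ^ n = 1) (hxy : (x * y) ^ n = 1) : x = 1 := by
  have hxn : x ^ n = 1 := by
    rw [(commute_of_pow_eq_one_of_coprime hmn hx hy).mul_pow, hy, mul_one] at hxy
    exact hxy
  simpa [hmn] using pow_gcd_eq_one.2 ⟨hx, hxn⟩

end FiniteGroup

theorem exists_add_eq_of_coprime {G : Type*} [AddGroup G] {g : G} {m n : ℕ}
    (hmn : m.Coprime n) (hg : (m * n) • g = 0) :
    ∃ a b : G, a + b = g ∧ m • a = 0 ∧ n • b = 0 := by
  obtain ⟨u, v, huv⟩ := Nat.isCoprime_iff_coprime.2 hmn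
  refine ⟨(v * n) • g, (u * m) • g, ?_, ?_, ?_⟩
  · rw [← add_zsmul, add_comm, huv, one_zsmul]
  · rw [← natCast_zsmul, ← mul_zsmul, show (m : ℤ) * (v * n) = v * ((m * n : ℕ) : ℤ) by
      push_cast; ring, mul_zsmul, natCast_zsmul, hg, zsmul_zero]
  · rw [← natCast_zsmul, ← mul_zsmul, show (n : ℤ) * (u * m) = u * ((m * n : ℕ) : ℤ) by
      push_cast; ring, mul_zsmul, natCast_zsmul, hg, zsmul_zero]

namespace SkewBrace

variable {A : Type*} [SkewBrace A]

theorem mul_zero (a : A) : a * 0 = a := by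
  have h := compat a 0 0
  rw [add_zero] at h
  exact sub_eq_zero.mp (add_eq_right.mp h.symm)

theorem one_eq_zero : (1 : A) = 0 :=
  (mul_zero 1).symm.trans (one_mul 0)

theorem lam_add (a b c : A) : lam a (b + c) = lam a b + lam a c := by
  simp only [lam, compat, sub_eq_add_neg, add_assoc]

def lamHom (a : A) : A →+ A := AddMonoidHom.mk' (lam a) (lam_add a)

theorem lam_nsmul (a : A) (n : ℕ) (x : A) : lam a (n • x) = n • lam a x :=
  map_nsmul (lamHom a) n x

theorem lam_zero (a : A) : lam a 0 = 0 :=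
  map_zero (lamHom a)

theorem mul_eq_add_lam (a b : A) : a * b = a + lam a b := by
  rw [lam, add_neg_cancel_left]

theorem lam_one (b : A) : lam 1 b = b := by
  rw [lam, one_mul, one_eq_zero, neg_zero, zero_add]

theorem mul_neg (a b : A) : a * -b = a - a * b + a := by
  have h := compat a b (-b)
  rw [add_neg_cancel, mul_zero] at h
  rw [eq_neg_add_of_add_eq h.symm, neg_sub]

theorem lam_mul (a b c : A) : lam (a * b) c = lam a (lam b c) := by
  rw [show lam b c = -b + b * c from rfl, lam_add]
  simp only [lam, mul_neg, mul_assoc, sub_eq_add_neg, add_assoc, neg_add_cancel_left,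
    add_neg_cancel_left]

theorem lam_lam_inv (a b : A) : lam a (lam a⁻¹ b) = b := by
  rw [← lam_mul, mul_inv_cancel, lam_one]

theorem lam_inv_lam (a b : A) : lam a⁻¹ (lam a b) = b := by
  rw [← lam_mul, inv_mul_cancel, lam_one]

theorem lam_inv_self (a : A) : lam a⁻¹ a = -a⁻¹ := by
  rw [lam, inv_mul_cancel, one_eq_zero, add_zero]

variable (A) in
def lamKer : AddSubgroup A where
  carrier := {x | ∀ b, lam x b = b}
  zero_mem' := by simpa [← one_eq_zero] using lam_one
  add_mem' {x y} hx hy b := by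
    rw [show x + y = x * y by rw [mul_eq_add_lam, hx y], lam_mul, hy b, hx b]
  neg_mem' {x} hx b := by
    have hneg : -x = x⁻¹ :=
      (inv_eq_of_mul_eq_one_right (by rw [mul_eq_add_lam, hx, add_neg_cancel, one_eq_zero])).symm
    simpa [hneg, hx b] using lam_inv_lam x b

theorem mem_lamKer {x : A} : x ∈ lamKer A ↔ ∀ b, lam x b = b := Iff.rfl

variable (A) in
def socle : AddSubgroup A := lamKer A ⊓ AddSubgroup.center A

theorem mem_socle {x : A} : x ∈ socle A ↔ ∀ b, lam x b = b ∧ x + b = b + x := by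
  simp [socle, mem_lamKer, AddSubgroup.mem_center_iff, forall_and, eq_comm]

theorem coe_socle : (socle A : Set A) = {x | ∀ b, lam x b = b ∧ x + b = b + x} :=
  Set.ext fun _ => mem_socle

theorem lam_mem_center (a : A) {x : A} (hx : x ∈ AddSubgroup.center A) :
    lam a x ∈ AddSubgroup.center A := by
  refine AddSubgroup.mem_center_iff.2 fun b => ?_
  have := congrArg (lam a) (AddSubgroup.mem_center_iff.1 hx (lam a⁻¹ b))
  rwa [lam_add, lam_add, lam_lam_inv] at this

theorem mul_mul_inv_eq_lam (a : A) {x : A} (hx : x ∈ socle A) : a * x * a⁻¹ = lam a x := by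
  have hcen : lam a x ∈ AddSubgroup.center A := lam_mem_center a hx.2
  rw [mul_assoc, mul_eq_add_lam x, hx.1, compat, mul_inv_cancel, one_eq_zero, add_zero,
    mul_eq_add_lam a x, add_sub_assoc, sub_eq_add_neg, ← AddSubgroup.mem_center_iff.1 hcen,
    add_neg_cancel_left]

theorem lam_mem_socle (a : A) {x : A} (hx : x ∈ socle A) : lam a x ∈ socle A := by
  refine ⟨fun b => ?_, lam_mem_center a hx.2⟩
  rw [← mul_mul_inv_eq_lam a hx, lam_mul, lam_mul, hx.1, lam_lam_inv]

theorem _root_.IsIdeal.inf {I J : AddSubgroup A} (hI : IsIdeal I) (hJ : IsIdeal J) :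
    IsIdeal (I ⊓ J) :=
  ⟨fun a x hx => ⟨hI.1 a x hx.1, hJ.1 a x hx.2⟩, fun a x hx => ⟨hI.2.1 a x hx.1, hJ.2.1 a x hx.2⟩,
    fun a x hx => ⟨hI.2.2 a x hx.1, hJ.2.2 a x hx.2⟩⟩

theorem isIdeal_socle : IsIdeal (socle A) := by
  refine ⟨fun a x hx => lam_mem_socle a hx, fun a x hx => ?_, fun a x hx => ?_⟩
  · rwa [AddSubgroup.mem_center_iff.1 hx.2, add_sub_cancel_right]
  · rw [mul_mul_inv_eq_lam a hx]
    exact lam_mem_socle a hx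

def _root_.IsLeftIdeal (I : AddSubgroup A) : Prop := ∀ a : A, ∀ x ∈ I, lam a x ∈ I

def _root_.IsLeftIdeal.toSubgroup {I : AddSubgroup A} (hI : IsLeftIdeal I) : Subgroup A where
  carrier := I
  one_mem' := by
    show (1 : A) ∈ I
    rw [one_eq_zero]
    exact I.zero_mem
  mul_mem' {a b} ha hb := by
    rw [mul_eq_add_lam]
    exact I.add_mem ha (hI a b hb)
  inv_mem' {a} ha := by
    rw [← neg_neg a⁻¹, ← lam_inv_self]
    exact I.neg_mem (hI a⁻¹ a ha)

theorem _root_.IsLeftIdeal.card_toSubgroup {I : AddSubgroup A} (hI : IsLeftIdeal I) :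
    Nat.card hI.toSubgroup = Nat.card I := rfl

end SkewBrace

section PrimaryComponent

variable {A : Type*} [AddGroup A] [Finite A] {p : ℕ} [Fact p.Prime]

variable (A p) in
/-- When `Multiplicative A` is nilpotent, its Sylow `p`-subgroup is unique and consists of the
elements of `p`-power order (`mem_addPrimaryComponent`). -/
noncomputable def addPrimaryComponent : AddSubgroup A :=
  Subgroup.toAddSubgroup' (default : Sylow p (Multiplicative A))

theorem card_addPrimaryComponent :
    Nat.card (addPrimaryComponent A p) = p ^ (Nat.card A).factorization p :=
  (default : Sylow p (Multiplicative A)).card_eq_multiplicity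

variable [Group.IsNilpotent (Multiplicative A)]

theorem mem_addPrimaryComponent {a : A} :
    a ∈ addPrimaryComponent A p ↔ ∃ k : ℕ, p ^ k • a = 0 := by
  rw [addPrimaryComponent, Subgroup.mem_toAddSubgroup']
  refine (Sylow.mem_iff_exists_pow_eq_one _).trans ?_
  simp only [← ofAdd_nsmul, ofAdd_eq_one]

theorem add_sub_mem_addPrimaryComponent (a : A) {x : A} (hx : x ∈ addPrimaryComponent A p) :
    a + x - a ∈ addPrimaryComponent A p := by
  rw [sub_eq_add_neg]
  exact Subgroup.Normal.conj_mem inferInstance (Multiplicative.ofAdd x) hx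
    (Multiplicative.ofAdd a)

theorem add_comm_of_mem_addPrimaryComponent {x y : A} {m : ℕ}
    (hx : x ∈ addPrimaryComponent A p) (hm : p.Coprime m) (hy : m • y = 0) : x + y = y + x := by
  obtain ⟨k, hk⟩ := mem_addPrimaryComponent.1 hx
  exact commute_of_pow_eq_one_of_coprime (x := Multiplicative.ofAdd x)
    (y := Multiplicative.ofAdd y) (hm.pow_left k) (by rw [← ofAdd_nsmul, hk]; rfl)
    (by rw [← ofAdd_nsmul, hy]; rfl)

theorem eq_zero_of_mem_addPrimaryComponent {x y : A} {m : ℕ}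
    (hx : x ∈ addPrimaryComponent A p) (hm : p.Coprime m) (hy : m • y = 0)
    (hxy : m • (x + y) = 0) : x = 0 := by
  obtain ⟨k, hk⟩ := mem_addPrimaryComponent.1 hx
  exact eq_one_of_pow_eq_one_of_mul_pow_eq_one (x := Multiplicative.ofAdd x)
    (y := Multiplicative.ofAdd y) (hm.pow_left k) (by rw [← ofAdd_nsmul, hk]; rfl)
    (by rw [← ofAdd_nsmul, hy]; rfl) (by rw [← ofAdd_add, ← ofAdd_nsmul, hxy]; rfl)

theorem exists_mem_addPrimaryComponent_add_eq (b : A) :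
    ∃ x y : A, ∃ m : ℕ, x ∈ addPrimaryComponent A p ∧ p.Coprime m ∧ m • y = 0 ∧ x + y = b := by
  have hp : p.Prime := Fact.out
  set n := addOrderOf b
  have hn : n ≠ 0 := (addOrderOf_pos b).ne'
  obtain ⟨x, y, hxy, hx, hy⟩ := exists_add_eq_of_coprime
    ((Nat.coprime_ordCompl hp hn).pow_left (n.factorization p))
    (g := b) (by rw [Nat.ordProj_mul_ordCompl_eq_self, addOrderOf_nsmul_eq_zero])
  exact ⟨x, y, _, mem_addPrimaryComponent.2 ⟨_, hx⟩, Nat.coprime_ordCompl hp hn, hy, hxy⟩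

end PrimaryComponent

namespace SkewBrace

variable {A : Type*} [SkewBrace A] [Finite A] [Group.IsNilpotent (Multiplicative A)]
  {p : ℕ} [Fact p.Prime]

theorem isLeftIdeal_addPrimaryComponent : IsLeftIdeal (addPrimaryComponent A p) := by
  intro a x hx
  obtain ⟨k, hk⟩ := mem_addPrimaryComponent.1 hx
  exact mem_addPrimaryComponent.2 ⟨k, by rw [← lam_nsmul, hk, lam_zero]⟩

theorem isIdeal_addPrimaryComponent (P : Sylow p A) (hP : (P : Subgroup A).Normal) :
    IsIdeal (addPrimaryComponent A p) := by
  have hleft : IsLeftIdeal (addPrimaryComponent A p) := isLeftIdeal_addPrimaryComponent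
  let S : Sylow p A :=
    Sylow.ofCard hleft.toSubgroup (hleft.card_toSubgroup.trans card_addPrimaryComponent)
  have := Sylow.unique_of_normal P hP
  have hS : (S : Subgroup A).Normal := Subsingleton.elim P S ▸ hP
  exact ⟨hleft, fun a x hx => add_sub_mem_addPrimaryComponent a hx,
    fun a x hx => hS.conj_mem x hx a⟩

theorem lam_eq_self_of_mem_addPrimaryComponent (hI : IsIdeal (addPrimaryComponent A p))
    {x y : A} {m : ℕ} (hx : x ∈ addPrimaryComponent A p) (hm : p.Coprime m)
    (hy : m • y = 0) : lam x y = y := by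
  set c := lam x y
  have hc : m • c = 0 := by rw [← lam_nsmul, hy, lam_zero]
  set d := lam y (y⁻¹ * x * y)
  have hd : d ∈ addPrimaryComponent A p := hI.1 y _ (by simpa using hI.2.2 y⁻¹ x hx)
  -- `x ∘ y = y ∘ (y⁻¹ ∘ x ∘ y)`
  have hsum : x + c = y + d := by
    rw [← mul_eq_add_lam, ← mul_eq_add_lam]
    group
  have hyc : y - c ∈ addPrimaryComponent A p := by
    rw [show y - c = x + (c + -d - c) by
      rw [eq_sub_of_add_eq hsum.symm]; simp only [sub_eq_add_neg, add_assoc]]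
    exact add_mem hx (add_sub_mem_addPrimaryComponent c (neg_mem hd))
  have := eq_zero_of_mem_addPrimaryComponent hyc hm hc (by rwa [sub_add_cancel])
  exact (sub_eq_zero.1 this).symm

theorem mem_socle_of_mem_addPrimaryComponent (hI : IsIdeal (addPrimaryComponent A p))
    {x : A} (hx : x ∈ addPrimaryComponent A p)
    (h : ∀ b ∈ addPrimaryComponent A p, lam x b = b ∧ x + b = b + x) : x ∈ socle A := by
  refine mem_socle.2 fun b => ?_
  obtain ⟨u, v, m, hu, hm, hv, rfl⟩ := exists_mem_addPrimaryComponent_add_eq (p := p) b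
  refine ⟨by rw [lam_add, (h u hu).1, lam_eq_self_of_mem_addPrimaryComponent hI hx hm hv], ?_⟩
  rw [← add_assoc, (h u hu).2, add_assoc, add_comm_of_mem_addPrimaryComponent hx hm hv,
    add_assoc]

end SkewBrace

open SkewBrace in
theorem sylow_ideal_soc_general {A : Type*} [SkewBrace A] [Finite A]
    (hnil : Group.IsNilpotent (Multiplicative A)) (p : ℕ) (hp : p.Prime)
    (P : Sylow p A) (hPn : (P : Subgroup A).Normal) :
    ∃ Sp : AddSubgroup A, (Sp : Set A) = {a : A | ∃ k : ℕ, p ^ k • a = 0} ∧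
      IsIdeal Sp ∧
      {x : A | x ∈ Sp ∧ ∀ b ∈ Sp, lam x b = b ∧ x + b = b + x} =
        {x : A | ∀ b : A, lam x b = b ∧ x + b = b + x} ∩ ↑Sp ∧
      ∃ J : AddSubgroup A,
        (J : Set A) = {x : A | x ∈ Sp ∧ ∀ b ∈ Sp, lam x b = b ∧ x + b = b + x} ∧
        IsIdeal J := by
  have := Fact.mk hp
  set Sp := addPrimaryComponent A p
  have hI : IsIdeal Sp := isIdeal_addPrimaryComponent P hPn
  have hsocle :
      {x : A | x ∈ Sp ∧ ∀ b ∈ Sp, lam x b = b ∧ x + b = b + x} = ↑(socle A ⊓ Sp) := by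
    ext x
    refine ⟨fun ⟨hx, h⟩ => ⟨mem_socle_of_mem_addPrimaryComponent hI hx h, hx⟩,
      fun ⟨hx, hxp⟩ => ⟨hxp, fun b _ => mem_socle.1 hx b⟩⟩
  refine ⟨Sp, Set.ext fun a => mem_addPrimaryComponent, hI, ?_, socle A ⊓ Sp, hsocle.symm,
    isIdeal_socle.inf hI⟩
  rw [hsocle, AddSubgroup.coe_inf, coe_socle]

/-- Let `A` be a finite skew left brace of nilpotent type whose multiplicative group has a
normal Sylow `p`-subgroup.  Then the Sylow `p`-subgroup `A_p` of `(A,+)` (the set of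
elements of additive `p`-power order) is an ideal of `A`, the socle of the sub-brace
`A_p` equals `Soc(A) ∩ A_p`, and in particular `Soc(A_p)` is an ideal of `A`. -/
theorem sylow_ideal_soc {A : Type*} [SkewBrace A] [Finite A]
    (hnil : Group.IsNilpotent (Multiplicative A)) (p : ℕ) (hp : p.Prime)
    (hdvd : p ∣ Nat.card A) (P : Sylow p A) (hPn : (P : Subgroup A).Normal) :
    ∃ Sp : AddSubgroup A, (Sp : Set A) = {a : A | ∃ k : ℕ, p ^ k • a = 0} ∧
      IsIdeal Sp ∧
      {x : A | x ∈ Sp ∧ ∀ b ∈ Sp, lam x b = b ∧ x + b = b + x} =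
        {x : A | ∀ b : A, lam x b = b ∧ x + b = b + x} ∩ ↑Sp ∧
      ∃ J : AddSubgroup A,
        (J : Set A) = {x : A | x ∈ Sp ∧ ∀ b ∈ Sp, lam x b = b ∧ x + b = b + x} ∧
        IsIdeal J :=
  sylow_ideal_soc_general hnil p hp P hPn
end

section
/- Let A be a skew left brace whose additive group is the internal direct product of left ideals B and C. Then A*(B+C) = A*B + A*C, where X*Y denotes the additive subgroup generated by {x*y : x ∈ X, y ∈ Y}. -/
/-- If the additive group of a skew left brace `A` is the internal direct product of two
left ideals `B` and `C`, then `A*(B+C) = A*B + A*C`. -/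
theorem star_of_direct_product {A : Type*} [SkewBrace A] (B C : AddSubgroup A)
    (hBl : ∀ a : A, ∀ x ∈ B, lam a x ∈ B) (hCl : ∀ a : A, ∀ x ∈ C, lam a x ∈ C)
    (hBn : ∀ g : A, ∀ x ∈ B, g + x - g ∈ B) (hCn : ∀ g : A, ∀ x ∈ C, g + x - g ∈ C)
    (hdisj : B ⊓ C = ⊥) (hjoin : B ⊔ C = ⊤) :
    starSet (Set.univ : Set A) ↑(B ⊔ C) = starSet (Set.univ : Set A) ↑B ⊔ starSet (Set.univ : Set A) ↑C := by
  -- additive commutation between B and C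
  have comm : ∀ b ∈ B, ∀ c ∈ C, b + c - b = c := by
    intro b hb c hc
    have h1 : b + c - b - c ∈ C := C.sub_mem (hCn b c hc) hc
    have h2 : b + c - b - c ∈ B := by
      have : c + (-b) - c ∈ B := hBn c (-b) (B.neg_mem hb)
      have := B.add_mem hb this
      simpa [sub_eq_add_neg, add_assoc] using this
    have : b + c - b - c ∈ B ⊓ C := ⟨h2, h1⟩
    rw [hdisj, AddSubgroup.mem_bot] at this
    have := sub_eq_zero.mp this
    simpa using this
  -- key identity
  have key : ∀ a b c : A, starB a (b + c) = starB a b + (b + starB a c - b) := by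
    intro a b c
    simp only [starB, lam, SkewBrace.compat, sub_eq_add_neg, neg_add_rev, add_assoc,
      neg_add_cancel_left, add_neg_cancel_left]
  have hsB : ∀ a : A, ∀ b ∈ B, starB a b ∈ B := fun a b hb =>
    B.sub_mem (hBl a b hb) hb
  have hsC : ∀ a : A, ∀ c ∈ C, starB a c ∈ C := fun a c hc =>
    C.sub_mem (hCl a c hc) hc
  -- decomposition of B ⊔ C
  have comm' : ∀ b ∈ B, ∀ c ∈ C, b + c = c + b := by
    intro b hb c hc
    have h := comm b hb c hc
    rw [sub_eq_iff_eq_add] at h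
    exact h
  have hdecomp : ∀ y ∈ B ⊔ C, ∃ b ∈ B, ∃ c ∈ C, y = b + c := by
    let D : AddSubgroup A :=
      { carrier := {y | ∃ b ∈ B, ∃ c ∈ C, y = b + c}
        add_mem' := by
          rintro x y ⟨b1, hb1, c1, hc1, rfl⟩ ⟨b2, hb2, c2, hc2, rfl⟩
          refine ⟨b1 + b2, B.add_mem hb1 hb2, c1 + c2, C.add_mem hc1 hc2, ?_⟩
          rw [add_assoc, ← add_assoc c1 b2 c2, ← comm' b2 hb2 c1 hc1, add_assoc,
            ← add_assoc]
        zero_mem' := ⟨0, B.zero_mem, 0, C.zero_mem, by simp⟩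
        neg_mem' := by
          rintro x ⟨b, hb, c, hc, rfl⟩
          refine ⟨-b, B.neg_mem hb, -c, C.neg_mem hc, ?_⟩
          rw [neg_add_rev, comm' (-b) (B.neg_mem hb) (-c) (C.neg_mem hc)] }
    intro y hy
    have hsub : B ⊔ C ≤ D := by
      apply sup_le
      · intro x hx; exact ⟨x, hx, 0, C.zero_mem, by simp⟩
      · intro x hx; exact ⟨0, B.zero_mem, x, hx, by simp⟩
    exact hsub hy
  apply le_antisymm
  · rw [starSet, AddSubgroup.closure_le]
    rintro z ⟨x, -, y, hy, rfl⟩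
    obtain ⟨b, hb, c, hc, rfl⟩ := hdecomp y hy
    rw [key x b c, comm b hb (starB x c) (hsC x c hc)]
    exact AddSubgroup.add_mem _
      (AddSubgroup.mem_sup_left (AddSubgroup.subset_closure ⟨x, trivial, b, hb, rfl⟩))
      (AddSubgroup.mem_sup_right (AddSubgroup.subset_closure ⟨x, trivial, c, hc, rfl⟩))
  · apply sup_le <;>
    · rw [starSet, AddSubgroup.closure_le]
      rintro z ⟨x, -, y, hy, rfl⟩
      refine AddSubgroup.subset_closure ⟨x, trivial, y, ?_, rfl⟩
      first
      | exact AddSubgroup.mem_sup_left hy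
      | exact AddSubgroup.mem_sup_right hy
end

section
/- The operation a ∘ b = a + 3^a · b on ℤ/8ℤ (with the usual addition) defines a left brace structure whose multiplicative group (ℤ/8ℤ, ∘) is isomorphic to the quaternion group Q₈. -/
/-- The circle operation `a ∘ b = a + 3^a · b` on `ℤ/8ℤ`. -/
def mul8 (a b : ZMod 8) : ZMod 8 := a + 3 ^ a.val * b

def q8fun : ZMod 8 → QuaternionGroup 2 := fun x =>
  match x with
  | 0 => .a 0
  | 1 => .a 1
  | 4 => .a 2
  | 5 => .a 3
  | 2 => .xa 0
  | 3 => .xa 1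
  | 6 => .xa 2
  | 7 => .xa 3

def q8inv : QuaternionGroup 2 → ZMod 8 := fun x =>
  match x with
  | .a 0 => 0
  | .a 1 => 1
  | .a 2 => 4
  | .a 3 => 5
  | .xa 0 => 2
  | .xa 1 => 3
  | .xa 2 => 6
  | .xa 3 => 7

def q8equiv : ZMod 8 ≃ QuaternionGroup 2 where
  toFun := q8fun
  invFun := q8inv
  left_inv := by decide
  right_inv := by decide

/-- The operation `a ∘ b = a + 3^a · b` on `ℤ/8ℤ` (with the usual addition) is a group
operation with identity `0`, it satisfies the left brace compatibility
`a ∘ (b + c) = a ∘ b - a + a ∘ c`, and the resulting multiplicative group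
`(ℤ/8ℤ, ∘)` is isomorphic to the quaternion group `Q₈`. -/
theorem brace_on_zmod8 :
    (∀ a b c : ZMod 8, mul8 (mul8 a b) c = mul8 a (mul8 b c)) ∧
    (∀ a : ZMod 8, mul8 0 a = a ∧ mul8 a 0 = a) ∧
    (∀ a : ZMod 8, ∃ b : ZMod 8, mul8 a b = 0 ∧ mul8 b a = 0) ∧
    (∀ a b c : ZMod 8, mul8 a (b + c) = mul8 a b - a + mul8 a c) ∧
    ∃ e : ZMod 8 ≃ QuaternionGroup 2, ∀ a b : ZMod 8, e (mul8 a b) = e a * e b := by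
  refine ⟨by decide, by decide, by decide, by decide, ⟨q8equiv, by decide⟩⟩
end
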